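/- arXiv:1505.03354 — 8 statements merged into one kernel-verified Lean document; each statement's English description precedes it below -/
import Mathlib

section
/- For Markovian SIR dynamics with infection rate τ > 0 and recovery rate γ ≥ 0 on a finite simple graph G that is acyclic, for every pure initial configuration x⁰ : V → Fin 3, every triple of pairwise distinct nodes i, j, k with i adjacent to j and j adjacent to k, and every t ≥ 0, the pair-based (unclustered) moment closure is exact on the states ISS and ISI, i.e. P_{ijk}(I,S,S;t) · P_j(S;t) = P_{ij}(I,S;t) · P_{jk}(S,S;t) and P_{ijk}(I,S,I;t) · P_j(S;t) = P_{ij}(I,S;t) · P_{jk}(S,I;t). -/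
open Finset

/-- Rate of a single off-diagonal transition for the Markovian SIR model with states
`0 = S`, `1 = I`, `2 = R`: nonzero only if `y` agrees with `x` except at exactly one node `i`,
where either `S → I` (rate `τ · #infectious neighbours`) or `I → R` (rate `γ`). -/
noncomputable def sirRate {V : Type*} [Fintype V] [DecidableEq V] (G : SimpleGraph V)
    [DecidableRel G.Adj] (τ γ : ℝ) (x y : V → Fin 3) : ℝ :=
  ∑ i : V,
    ((if (∀ j, j ≠ i → x j = y j) ∧ x i = 0 ∧ y i = 1 then
        τ * ((Finset.univ.filter (fun j => G.Adj i j ∧ x j = 1)).card : ℝ) else 0)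
      + (if (∀ j, j ≠ i → x j = y j) ∧ x i = 1 ∧ y i = 2 then γ else 0))

/-- Generator matrix of the Markovian SIR dynamics on configurations `V → Fin 3`. -/
noncomputable def sirGen {V : Type*} [Fintype V] [DecidableEq V] (G : SimpleGraph V)
    [DecidableRel G.Adj] (τ γ : ℝ) : Matrix (V → Fin 3) (V → Fin 3) ℝ :=
  fun x y => if x = y then -∑ z ∈ Finset.univ.erase x, sirRate G τ γ x z
             else sirRate G τ γ x y

/-- Distribution at time `t` started from the pure configuration `x0`. -/
noncomputable def sirP {V : Type*} [Fintype V] [DecidableEq V] (G : SimpleGraph V)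
    [DecidableRel G.Adj] (τ γ : ℝ) (x0 : V → Fin 3) (t : ℝ) (x : V → Fin 3) : ℝ :=
  NormedSpace.exp (t • sirGen G τ γ) x0 x

/-- Single-node marginal `P_i(A;t)`. -/
noncomputable def sirP1 {V : Type*} [Fintype V] [DecidableEq V] (G : SimpleGraph V)
    [DecidableRel G.Adj] (τ γ : ℝ) (x0 : V → Fin 3) (i : V) (A : Fin 3) (t : ℝ) : ℝ :=
  ∑ x ∈ Finset.univ.filter (fun x : V → Fin 3 => x i = A), sirP G τ γ x0 t x

/-- Pair marginal `P_{ij}(A,B;t)`. -/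
noncomputable def sirP2 {V : Type*} [Fintype V] [DecidableEq V] (G : SimpleGraph V)
    [DecidableRel G.Adj] (τ γ : ℝ) (x0 : V → Fin 3) (i j : V) (A B : Fin 3) (t : ℝ) : ℝ :=
  ∑ x ∈ Finset.univ.filter (fun x : V → Fin 3 => x i = A ∧ x j = B), sirP G τ γ x0 t x

/-- Triple marginal `P_{ijk}(A,B,C;t)`. -/
noncomputable def sirP3 {V : Type*} [Fintype V] [DecidableEq V] (G : SimpleGraph V)
    [DecidableRel G.Adj] (τ γ : ℝ) (x0 : V → Fin 3) (i j k : V) (A B C : Fin 3) (t : ℝ) : ℝ :=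
  ∑ x ∈ Finset.univ.filter (fun x : V → Fin 3 => x i = A ∧ x j = B ∧ x k = C),
    sirP G τ γ x0 t x

/-!
While node `j` is susceptible it neither infects nor recovers, and in a tree it separates the side
`A` of `i` from the side `B` of `k`: no edge joins `A` and `B`. The configurations with `x j = S`
cannot be re-entered once left, so on them `p_t` is the exponential of the corresponding diagonal
block of the generator. That block is a Kronecker sum `Q_A ⊗ 1 + 1 ⊗ Q_B`: every transition
changes one side at a rate not depending on the other, and the total escape rate (recoveries,
infections, and the infection of `j` itself at rate `τ` times its number of infectious neighbours,
counted separately in `A` and in `B`) is a sum of an `A`-part and a `B`-part. Hence on `x j = S`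
we get `p_t = exp (t Q_A) ⊗ exp (t Q_B)`, and the closure identities express the resulting
independence of the states of `i` and `k` given that `j` is susceptible.
-/

open NormedSpace Matrix Kronecker
open scoped Nat

namespace Matrix

variable {m n ι : Type*} [DecidableEq m] [DecidableEq n]

theorem exists_eq_kronecker_one_add_one_kronecker {R : Type*} [Ring R]
    (M : Matrix (m × n) (m × n) R) (a₀ : m) (b₀ : n)
    (h_both : ∀ a a' b b', a ≠ a' → b ≠ b' → M (a, b) (a', b') = 0)
    (h_left : ∀ a a' b, a ≠ a' → M (a, b) (a', b) = M (a, b₀) (a', b₀))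
    (h_right : ∀ a b b', b ≠ b' → M (a, b) (a, b') = M (a₀, b) (a₀, b'))
    (h_diag : ∀ a b,
      M (a, b) (a, b) + M (a₀, b₀) (a₀, b₀) = M (a, b₀) (a, b₀) + M (a₀, b) (a₀, b)) :
    ∃ (A : Matrix m m R) (B : Matrix n n R), M = A ⊗ₖ 1 + 1 ⊗ₖ B := by
  refine ⟨of fun a a' => M (a, b₀) (a', b₀),
    of fun b b' => M (a₀, b) (a₀, b') - if b = b' then M (a₀, b₀) (a₀, b₀) else 0, ?_⟩
  ext ⟨a, b⟩ ⟨a', b'⟩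
  simp only [add_apply, kroneckerMap_apply, one_apply, of_apply]
  by_cases ha : a = a' <;> by_cases hb : b = b'
  · subst ha hb
    simp only [if_true, mul_one, one_mul]
    rw [← add_sub_assoc, eq_sub_iff_add_eq]
    exact h_diag a b
  · subst ha; simp [hb, h_right a b b' hb]
  · subst hb; simp [ha, h_left a a' b ha]
  · simp [ha, hb, h_both a a' b b' ha hb]

variable [Fintype m] [Fintype n] [Fintype ι] [DecidableEq ι] {𝕂 : Type*} [RCLike 𝕂]

theorem exp_apply_eq_tsum (Q : Matrix n n 𝕂) (x y : n) :
    exp Q x y = ∑' k : ℕ, (k !⁻¹ : 𝕂) * (Q ^ k) x y := by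
  open scoped Norms.Operator in
  have h := expSeries_summable' (𝕂 := 𝕂) Q
  rw [exp_eq_tsum 𝕂]
  exact (Pi.hasSum.1 (Pi.hasSum.1 h.hasSum x) y).tsum_eq.symm

theorem kronecker_one_pow (A : Matrix m m 𝕂) (k : ℕ) :
    (A ⊗ₖ (1 : Matrix n n 𝕂)) ^ k = (A ^ k) ⊗ₖ (1 : Matrix n n 𝕂) := by
  induction k with
  | zero => simp
  | succ k ih => rw [pow_succ, ih, ← mul_kronecker_mul, one_mul, pow_succ]

theorem one_kronecker_pow (B : Matrix n n 𝕂) (k : ℕ) :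
    ((1 : Matrix m m 𝕂) ⊗ₖ B) ^ k = (1 : Matrix m m 𝕂) ⊗ₖ (B ^ k) := by
  induction k with
  | zero => simp
  | succ k ih => rw [pow_succ, ih, ← mul_kronecker_mul, one_mul, pow_succ]

theorem exp_kronecker_one (A : Matrix m m 𝕂) :
    exp (A ⊗ₖ (1 : Matrix n n 𝕂)) = exp A ⊗ₖ (1 : Matrix n n 𝕂) := by
  ext p q
  simp only [exp_apply_eq_tsum, kronecker_one_pow, kroneckerMap_apply, ← mul_assoc, tsum_mul_right]

theorem exp_one_kronecker (B : Matrix n n 𝕂) :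
    exp ((1 : Matrix m m 𝕂) ⊗ₖ B) = (1 : Matrix m m 𝕂) ⊗ₖ exp B := by
  ext p q
  simp only [exp_apply_eq_tsum, one_kronecker_pow, kroneckerMap_apply,
    mul_left_comm _ ((1 : Matrix m m 𝕂) _ _), tsum_mul_left]

theorem exp_kronecker_one_add_one_kronecker (A : Matrix m m 𝕂) (B : Matrix n n 𝕂) :
    exp (A ⊗ₖ (1 : Matrix n n 𝕂) + (1 : Matrix m m 𝕂) ⊗ₖ B) = exp A ⊗ₖ exp B := by
  have hAB : Commute (A ⊗ₖ (1 : Matrix n n 𝕂)) ((1 : Matrix m m 𝕂) ⊗ₖ B) := by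
    simp only [Commute, SemiconjBy, ← mul_kronecker_mul, mul_one, one_mul]
  rw [exp_add_of_commute _ _ hAB, exp_kronecker_one, exp_one_kronecker, ← mul_kronecker_mul,
    mul_one, one_mul]

theorem submatrix_pow_of_forall_notMem_range {R : Type*} [Semiring R] (Q : Matrix n n R)
    {e : ι → n} (he : Function.Injective e) (hQ : ∀ x ∉ Set.range e, ∀ y, Q x (e y) = 0)
    (k : ℕ) : (Q ^ k).submatrix e e = Q.submatrix e e ^ k := by
  induction k with
  | zero => simp [submatrix_one _ he]
  | succ k ih =>
    ext x y
    rw [pow_succ, pow_succ, submatrix_apply, mul_apply, mul_apply, ← ih]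
    refine (Fintype.sum_of_injective e he _ _ (fun z hz => ?_) fun _ => rfl).symm
    rw [hQ z hz y, mul_zero]

theorem submatrix_exp_of_forall_notMem_range (Q : Matrix n n 𝕂)
    {e : ι → n} (he : Function.Injective e) (hQ : ∀ x ∉ Set.range e, ∀ y, Q x (e y) = 0) :
    (exp Q).submatrix e e = exp (Q.submatrix e e) := by
  ext x y
  simp only [submatrix_apply, exp_apply_eq_tsum, ← submatrix_pow_of_forall_notMem_range Q he hQ]

end Matrix

section Glue

variable {V σ : Type*} [DecidableEq V] {A : Set V} [DecidablePred (· ∈ A)] {j : V} {s : σ}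

def glue (A : Set V) [DecidablePred (· ∈ A)] (j : V) (s : σ)
    (p : (A → σ) × ({v // v ∉ A ∧ v ≠ j} → σ)) (v : V) : σ :=
  if hA : v ∈ A then p.1 ⟨v, hA⟩ else if hj : v = j then s else p.2 ⟨v, hA, hj⟩

@[simp]
theorem glue_of_mem (p) {v : V} (hv : v ∈ A) : glue A j s p v = p.1 ⟨v, hv⟩ := dif_pos hv

theorem glue_self (p) (hj : j ∉ A) : glue A j s p j = s := by
  simp [glue, hj]

@[simp]
theorem glue_of_notMem (p) {v : V} (hv : v ∉ A) (hvj : v ≠ j) :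
    glue A j s p v = p.2 ⟨v, hv, hvj⟩ := by
  simp [glue, hv, hvj]

theorem glue_injective : Function.Injective (glue A j s) := by
  rintro ⟨a, b⟩ ⟨a', b'⟩ h
  ext ⟨v, hv⟩
  · simpa [hv] using congrFun h v
  · simpa [hv.1, hv.2] using congrFun h v

theorem mem_range_glue (hj : j ∉ A) {x : V → σ} : x ∈ Set.range (glue A j s) ↔ x j = s := by
  refine ⟨?_, fun hx => ⟨(fun v => x v, fun v => x v), funext fun v => ?_⟩⟩
  · rintro ⟨p, rfl⟩
    exact glue_self p hj
  · by_cases hvA : v ∈ A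
    · simp [hvA]
    · by_cases hvj : v = j
      · subst hvj; simp [glue_self _ hj, hx]
      · simp [hvA, hvj]

theorem glue_eq_glue_of_mem_insert (a : A → σ) (b b' : {v // v ∉ A ∧ v ≠ j} → σ) {v : V}
    (hv : v ∈ insert j A) : glue A j s (a, b) v = glue A j s (a, b') v := by
  by_cases hvA : v ∈ A
  · simp [hvA]
  · obtain rfl : v = j := by simpa [hvA] using hv
    simp [glue, hvA]

theorem glue_eq_glue_of_notMem (a a' : A → σ) (b : {v // v ∉ A ∧ v ≠ j} → σ) {v : V}
    (hv : v ∉ A) : glue A j s (a, b) v = glue A j s (a', b) v := by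
  simp [glue, hv]

theorem sum_glue_add_sum_glue {R ι : Type*} [AddCommMonoid R] (t : Finset ι)
    (f : ι → (V → σ) → R) (hf : ∀ k ∈ t, DependsOn (f k) (insert j A) ∨ DependsOn (f k) Aᶜ)
    (a a₀ : A → σ) (b b₀ : {v // v ∉ A ∧ v ≠ j} → σ) :
    ∑ k ∈ t, f k (glue A j s (a, b)) + ∑ k ∈ t, f k (glue A j s (a₀, b₀))
      = ∑ k ∈ t, f k (glue A j s (a, b₀)) + ∑ k ∈ t, f k (glue A j s (a₀, b)) := by
  simp only [← Finset.sum_add_distrib]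
  refine Finset.sum_congr rfl fun k hk => ?_
  rcases hf k hk with hA | hA
  · rw [hA fun v hv => glue_eq_glue_of_mem_insert a b b₀ hv,
      hA fun v hv => glue_eq_glue_of_mem_insert a₀ b₀ b hv]
  · rw [hA fun v hv => glue_eq_glue_of_notMem a a₀ b hv,
      hA fun v hv => glue_eq_glue_of_notMem a₀ a b₀ hv, add_comm]

theorem sum_filter_glue_eq_mul [Fintype V] [Fintype σ] [DecidableEq σ] [Fintype A]
    [Fintype {v // v ∉ A ∧ v ≠ j}]
    {R : Type*} [CommSemiring R] {f : (V → σ) → R}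
    {FA : (A → σ) → R} {FB : ({v // v ∉ A ∧ v ≠ j} → σ) → R}
    (hF : ∀ a b, f (glue A j s (a, b)) = FA a * FB b)
    (hj : j ∉ A) {i k : V} (hi : i ∈ A) (hk : k ∉ A) (hkj : k ≠ j)
    (p q : σ → Prop) [DecidablePred p] [DecidablePred q] :
    ∑ x ∈ Finset.univ.filter (fun x => p (x i) ∧ x j = s ∧ q (x k)), f x
      = (∑ a ∈ Finset.univ.filter (fun a => p (a ⟨i, hi⟩)), FA a)
        * ∑ b ∈ Finset.univ.filter (fun b => q (b ⟨k, hk, hkj⟩)), FB b := by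
  have himage : Finset.univ.filter (fun x => p (x i) ∧ x j = s ∧ q (x k))
      = (Finset.univ.filter (fun a => p (a ⟨i, hi⟩)) ×ˢ
          Finset.univ.filter (fun b => q (b ⟨k, hk, hkj⟩))).image (glue A j s) := by
    ext x
    simp only [Finset.mem_filter, Finset.mem_univ, true_and, Finset.mem_image,
      Finset.mem_product]
    constructor
    · rintro ⟨hpi, hxj, hqk⟩
      obtain ⟨⟨a, b⟩, rfl⟩ := (mem_range_glue hj).2 hxj
      exact ⟨(a, b), ⟨by simpa [hi] using hpi, by simpa [hk, hkj] using hqk⟩, rfl⟩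
    · rintro ⟨⟨a, b⟩, ⟨hpi, hqk⟩, rfl⟩
      exact ⟨by simpa [hi] using hpi, glue_self _ hj, by simpa [hk, hkj] using hqk⟩
  rw [himage, Finset.sum_image glue_injective.injOn, Finset.sum_product, Finset.sum_mul_sum]
  simp only [hF]

end Glue

theorem SimpleGraph.IsAcyclic.exists_separation {V : Type*} {G : SimpleGraph V}
    (hG : G.IsAcyclic) {i j k : V} (hij : G.Adj i j) (hjk : G.Adj j k) (hik : i ≠ k) :
    ∃ A : Set V, i ∈ A ∧ j ∉ A ∧ k ∉ A ∧ ∀ v ∈ A, ∀ w, G.Adj v w → w ∈ A ∨ w = j := by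
  have hbridge : ¬ (G.deleteEdges {s(i, j)}).Reachable i j :=
    isBridge_iff.1 (isAcyclic_iff_forall_adj_isBridge.1 hG hij)
  refine ⟨{v | (G.deleteEdges {s(i, j)}).Reachable i v}, .refl i, hbridge,
    fun hk => hbridge (hk.trans (SimpleGraph.Adj.reachable ?_)), fun v hv w hvw => ?_⟩
  · simp [hjk.symm, hik.symm, hjk.ne']
  · by_cases he : s(v, w) = s(i, j)
    · rcases Sym2.eq_iff.1 he with ⟨rfl, rfl⟩ | ⟨rfl, rfl⟩
      exacts [Or.inr rfl, Or.inl (.refl _)]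
    · exact Or.inl (hv.trans (SimpleGraph.Adj.reachable (by simp [hvw, he])))

theorem SimpleGraph.Adj.pair_subset_insert_or_subset_compl {V : Type*} {G : SimpleGraph V}
    {A : Set V} {j v w : V} (hvw : G.Adj v w) (hA : ∀ v ∈ A, ∀ w, G.Adj v w → w ∈ A ∨ w = j) :
    {v, w} ⊆ insert j A ∨ {v, w} ⊆ Aᶜ := by
  by_cases hv : v ∈ A
  · left
    rcases hA v hv w hvw with hw | rfl <;> simp [Set.insert_subset_iff, *]
  by_cases hw : w ∈ A
  · left
    obtain rfl : v = j := (hA w hw v hvw.symm).resolve_left hv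
    simp [Set.insert_subset_iff, hw]
  · right
    simp [Set.insert_subset_iff, hv, hw]

theorem sum_erase_ite_update {V σ R : Type*} [Fintype V] [DecidableEq V] [Fintype σ]
    [DecidableEq σ] [AddCommMonoid R] (x : V → σ) (v : V) {c d : σ} (hcd : c ≠ d) (r : R) :
    ∑ z ∈ Finset.univ.erase x, (if (∀ w, w ≠ v → x w = z w) ∧ x v = c ∧ z v = d then r else 0)
      = if x v = c then r else 0 := by
  have key : ∀ z, ((∀ w, w ≠ v → x w = z w) ∧ x v = c ∧ z v = d)
      ↔ x v = c ∧ z = Function.update x v d := fun z => by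
    rw [Function.eq_update_iff]
    exact ⟨fun ⟨h1, h2, h3⟩ => ⟨h2, h3, fun w hw => (h1 w hw).symm⟩,
      fun ⟨h2, h3, h1⟩ => ⟨fun w hw => (h1 w hw).symm, h2, h3⟩⟩
  simp_rw [key, ite_and]
  split_ifs with hc
  · rw [Finset.sum_ite_eq', if_pos]
    refine Finset.mem_erase.2 ⟨fun h => hcd ?_, Finset.mem_univ _⟩
    rw [← hc, ← congrFun h v, Function.update_self]
  · simp

section SIR

variable {V : Type*} [Fintype V] [DecidableEq V] (G : SimpleGraph V) [DecidableRel G.Adj]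
  (τ γ : ℝ)

theorem sirGen_of_ne {x y : V → Fin 3} (h : x ≠ y) : sirGen G τ γ x y = sirRate G τ γ x y :=
  if_neg h

theorem exists_of_sirRate_ne_zero {x y : V → Fin 3} (h : sirRate G τ γ x y ≠ 0) :
    ∃ u, (∀ w, w ≠ u → x w = y w) ∧ (x u = 0 ∧ y u = 1 ∨ x u = 1 ∧ y u = 2) := by
  obtain ⟨u, -, hu⟩ := Finset.exists_ne_zero_of_sum_ne_zero h
  by_cases h1 : (∀ w, w ≠ u → x w = y w) ∧ x u = 0 ∧ y u = 1
  · exact ⟨u, h1.1, Or.inl h1.2⟩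
  by_cases h2 : (∀ w, w ≠ u → x w = y w) ∧ x u = 1 ∧ y u = 2
  · exact ⟨u, h2.1, Or.inr h2.2⟩
  simp [h1, h2] at hu

theorem sirRate_congr {x y x' y' : V → Fin 3}
    (h : ∀ v, (x v ≠ y v ∨ x' v ≠ y' v) →
      x v = x' v ∧ y v = y' v ∧ ∀ w, G.Adj v w → x w = x' w) :
    sirRate G τ γ x y = sirRate G τ γ x' y' := by
  have hfix : ∀ v, x v = y v ↔ x' v = y' v := fun v => by
    by_cases hv : x v ≠ y v ∨ x' v ≠ y' v
    · obtain ⟨h1, h2, -⟩ := h v hv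
      rw [h1, h2]
    · push Not at hv
      simp only [hv]
  refine Finset.sum_congr rfl fun v _ => ?_
  have hrest : (∀ w, w ≠ v → x w = y w) ↔ (∀ w, w ≠ v → x' w = y' w) :=
    forall₂_congr fun w _ => hfix w
  by_cases hv : x v ≠ y v ∨ x' v ≠ y' v
  · obtain ⟨h1, h2, h3⟩ := h v hv
    have hcard : (Finset.univ.filter fun w => G.Adj v w ∧ x w = 1)
        = Finset.univ.filter fun w => G.Adj v w ∧ x' w = 1 :=
      Finset.filter_congr fun w _ => and_congr_right fun hw => by rw [h3 w hw]
    simp only [hrest, h1, h2, hcard]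
  · have hstay : ∀ c : Fin 3, ¬(c = 0 ∧ c = 1) ∧ ¬(c = 1 ∧ c = 2) := by decide
    push Not at hv
    simp [hv.1, hv.2, hstay]

theorem sum_erase_sirRate (x : V → Fin 3) :
    ∑ z ∈ Finset.univ.erase x, sirRate G τ γ x z
      = ∑ e : V × V, (if G.Adj e.1 e.2 ∧ x e.1 = 0 ∧ x e.2 = 1 then τ else 0)
        + ∑ v, if x v = 1 then γ else 0 := by
  unfold sirRate
  rw [Finset.sum_comm, Fintype.sum_prod_type, ← Finset.sum_add_distrib]
  refine Finset.sum_congr rfl fun v _ => ?_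
  rw [Finset.sum_add_distrib, sum_erase_ite_update x v (by decide),
    sum_erase_ite_update x v (by decide)]
  congr 1
  split_ifs with hv
  · simp [hv, Finset.sum_ite, mul_comm]
  · simp [hv]

theorem sirGen_eq_zero_of_ne_zero_of_eq_zero {x y : V → Fin 3} (v : V) (hx : x v ≠ 0)
    (hy : y v = 0) : sirGen G τ γ x y = 0 := by
  rw [sirGen_of_ne G τ γ fun h => hx (by rw [h, hy])]
  by_contra h
  obtain ⟨u, hu, hchange⟩ := exists_of_sirRate_ne_zero G τ γ h
  by_cases huv : v = u
  · subst huv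
    rcases hchange with ⟨h0, -⟩ | ⟨-, h2⟩
    exacts [hx h0, absurd (hy ▸ h2) (by decide)]
  · exact hx (hy ▸ hu v huv)

theorem sirP_eq_zero_of_ne_zero_of_eq_zero {x0 x : V → Fin 3} (v : V) (t : ℝ)
    (hx0 : x0 v ≠ 0) (hx : x v = 0) : sirP G τ γ x0 t x = 0 := by
  have hB : (t • sirGen G τ γ).BlockTriangular fun y => y v ≠ 0 := fun y z hzy => by
    obtain ⟨hy, hz⟩ := Classical.not_imp.1 (lt_iff_le_not_ge.1 hzy).2
    rw [Matrix.smul_apply, sirGen_eq_zero_of_ne_zero_of_eq_zero G τ γ v hy (not_not.1 hz),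
      smul_zero]
  exact hB.exp (lt_iff_le_not_ge.2 ⟨fun h => absurd hx h, fun h => h hx0 hx⟩)

variable {A : Set V} [DecidablePred (· ∈ A)] {j : V}

theorem sirRate_glue_eq_zero {a a' : A → Fin 3} {b b' : {v // v ∉ A ∧ v ≠ j} → Fin 3}
    (s : Fin 3) (ha : a ≠ a') (hb : b ≠ b') :
    sirRate G τ γ (glue A j s (a, b)) (glue A j s (a', b')) = 0 := by
  by_contra h
  obtain ⟨u, hu, -⟩ := exists_of_sirRate_ne_zero G τ γ h
  obtain ⟨⟨v, hv⟩, hav⟩ := Function.ne_iff.1 ha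
  obtain ⟨⟨w, hw⟩, hbw⟩ := Function.ne_iff.1 hb
  have hvu : v = u := by_contra fun hvu => hav (by simpa [hv] using hu v hvu)
  have hwu : w = u := by_contra fun hwu => hbw (by simpa [hw.1, hw.2] using hu w hwu)
  exact hw.1 (hwu ▸ hvu ▸ hv)

theorem sirRate_glue_fst (hA : ∀ v ∈ A, ∀ w, G.Adj v w → w ∈ A ∨ w = j) (s : Fin 3)
    (a a' : A → Fin 3) (b b₀ : {v // v ∉ A ∧ v ≠ j} → Fin 3) :
    sirRate G τ γ (glue A j s (a, b)) (glue A j s (a', b))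
      = sirRate G τ γ (glue A j s (a, b₀)) (glue A j s (a', b₀)) := by
  refine sirRate_congr G τ γ fun v hv => ?_
  have hvA : v ∈ A := by
    by_contra hvA
    simp [glue_eq_glue_of_notMem a a' _ hvA] at hv
  refine ⟨glue_eq_glue_of_mem_insert _ _ _ (Set.mem_insert_of_mem _ hvA),
    glue_eq_glue_of_mem_insert _ _ _ (Set.mem_insert_of_mem _ hvA),
    fun w hw => glue_eq_glue_of_mem_insert _ _ _ ?_⟩
  rcases hA v hvA w hw with h | rfl
  exacts [Set.mem_insert_of_mem _ h, Set.mem_insert _ _]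

theorem sirRate_glue_snd (hA : ∀ v ∈ A, ∀ w, G.Adj v w → w ∈ A ∨ w = j) (s : Fin 3)
    (a a₀ : A → Fin 3) (b b' : {v // v ∉ A ∧ v ≠ j} → Fin 3) :
    sirRate G τ γ (glue A j s (a, b)) (glue A j s (a, b'))
      = sirRate G τ γ (glue A j s (a₀, b)) (glue A j s (a₀, b')) := by
  refine sirRate_congr G τ γ fun v hv => ?_
  have hvA : v ∉ insert j A := by
    intro hvA
    simp [glue_eq_glue_of_mem_insert a b b' hvA, glue_eq_glue_of_mem_insert _ b b' hvA] at hv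
  have hvA' : v ∉ A := fun h => hvA (Set.mem_insert_of_mem _ h)
  refine ⟨glue_eq_glue_of_notMem _ _ _ hvA', glue_eq_glue_of_notMem _ _ _ hvA',
    fun w hw => glue_eq_glue_of_notMem _ _ _ fun hwA => hvA ?_⟩
  rcases hA w hwA v hw.symm with h | rfl
  exacts [Set.mem_insert_of_mem _ h, Set.mem_insert _ _]

theorem sum_erase_sirRate_glue_add (hA : ∀ v ∈ A, ∀ w, G.Adj v w → w ∈ A ∨ w = j) (s : Fin 3)
    (a a₀ : A → Fin 3) (b b₀ : {v // v ∉ A ∧ v ≠ j} → Fin 3) :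
    let out := fun x => ∑ z ∈ Finset.univ.erase x, sirRate G τ γ x z
    out (glue A j s (a, b)) + out (glue A j s (a₀, b₀))
      = out (glue A j s (a, b₀)) + out (glue A j s (a₀, b)) := by
  have hedge := sum_glue_add_sum_glue (s := s) Finset.univ
    (fun (e : V × V) x => if G.Adj e.1 e.2 ∧ x e.1 = 0 ∧ x e.2 = 1 then τ else 0)
    (fun e _ => by
      by_cases he : G.Adj e.1 e.2
      · have hdep : DependsOn (fun x : V → Fin 3 =>
            if G.Adj e.1 e.2 ∧ x e.1 = 0 ∧ x e.2 = 1 then τ else 0) {e.1, e.2} :=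
          fun x y hxy => by simp [hxy e.1 (by simp), hxy e.2 (by simp)]
        exact (he.pair_subset_insert_or_subset_compl hA).imp hdep.mono hdep.mono
      · exact Or.inl fun x y _ => by simp [he])
    a a₀ b b₀
  have hvertex := sum_glue_add_sum_glue (s := s) Finset.univ
    (fun v x => if x v = 1 then γ else 0)
    (fun v _ => by
      have hdep : DependsOn (fun x : V → Fin 3 => if x v = 1 then γ else 0) {v} :=
        fun x y hxy => by simp [hxy v rfl]
      by_cases hv : v ∈ A
      · exact Or.inl (hdep.mono (by simp [hv]))
      · exact Or.inr (hdep.mono (by simpa using hv)))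
    a a₀ b b₀
  simp only [sum_erase_sirRate]
  linarith

theorem exists_sirGen_submatrix_glue_eq_kronecker (hA : ∀ v ∈ A, ∀ w, G.Adj v w → w ∈ A ∨ w = j)
    (s : Fin 3) :
    ∃ (MA : Matrix (A → Fin 3) (A → Fin 3) ℝ)
      (MB : Matrix ({v // v ∉ A ∧ v ≠ j} → Fin 3) ({v // v ∉ A ∧ v ≠ j} → Fin 3) ℝ),
      (sirGen G τ γ).submatrix (glue A j s) (glue A j s) = MA ⊗ₖ 1 + 1 ⊗ₖ MB := by
  have hne : ∀ {p q}, p ≠ q → glue A j s p ≠ glue A j s q := glue_injective.ne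
  refine exists_eq_kronecker_one_add_one_kronecker _ (fun _ => 0) (fun _ => 0) ?_ ?_ ?_ ?_
  · intro a a' b b' ha hb
    rw [submatrix_apply, sirGen_of_ne G τ γ (hne (by simp [ha])),
      sirRate_glue_eq_zero G τ γ s ha hb]
  · intro a a' b ha
    rw [submatrix_apply, submatrix_apply, sirGen_of_ne G τ γ (hne (by simp [ha])),
      sirGen_of_ne G τ γ (hne (by simp [ha])), sirRate_glue_fst G τ γ hA]
  · intro a b b' hb
    rw [submatrix_apply, submatrix_apply, sirGen_of_ne G τ γ (hne (by simp [hb])),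
      sirGen_of_ne G τ γ (hne (by simp [hb])), sirRate_glue_snd G τ γ hA]
  · intro a b
    have := sum_erase_sirRate_glue_add G τ γ hA s a (fun _ => 0) b (fun _ => 0)
    simp only [submatrix_apply, sirGen, if_true]
    linarith

theorem exists_sirP_glue_eq_mul (hjA : j ∉ A) (hA : ∀ v ∈ A, ∀ w, G.Adj v w → w ∈ A ∨ w = j)
    (x0 : V → Fin 3) (t : ℝ) :
    ∃ (FA : (A → Fin 3) → ℝ) (FB : ({v // v ∉ A ∧ v ≠ j} → Fin 3) → ℝ),
      ∀ a b, sirP G τ γ x0 t (glue A j 0 (a, b)) = FA a * FB b := by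
  by_cases hx0 : x0 j = 0
  swap
  · exact ⟨0, 0, fun a b => by
      simpa using sirP_eq_zero_of_ne_zero_of_eq_zero G τ γ j t hx0 (glue_self _ hjA)⟩
  obtain ⟨p₀, rfl⟩ := (mem_range_glue hjA).2 hx0
  obtain ⟨MA, MB, hM⟩ := exists_sirGen_submatrix_glue_eq_kronecker G τ γ hA 0
  refine ⟨fun a => exp (t • MA) p₀.1 a, fun b => exp (t • MB) p₀.2 b, fun a b => ?_⟩
  have hclosed : ∀ x ∉ Set.range (glue A j 0), ∀ y, (t • sirGen G τ γ) x (glue A j 0 y) = 0 :=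
    fun x hx y => by
      rw [Matrix.smul_apply, sirGen_eq_zero_of_ne_zero_of_eq_zero G τ γ j
        ((mem_range_glue hjA).not.1 hx) (glue_self _ hjA), smul_zero]
  calc sirP G τ γ (glue A j 0 p₀) t (glue A j 0 (a, b))
      = (exp (t • sirGen G τ γ)).submatrix (glue A j 0) (glue A j 0) p₀ (a, b) := rfl
    _ = exp (t • (sirGen G τ γ).submatrix (glue A j 0) (glue A j 0)) p₀ (a, b) := by
      rw [submatrix_exp_of_forall_notMem_range _ glue_injective hclosed]
      rfl
    _ = exp ((t • MA) ⊗ₖ 1 + 1 ⊗ₖ (t • MB) : Matrix _ _ ℝ) p₀ (a, b) := by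
      rw [hM, smul_add, smul_kronecker, kronecker_smul]
    _ = _ := by rw [exp_kronecker_one_add_one_kronecker]; rfl

end SIR

theorem sir_pair_closure_exact_on_trees_general
    {V : Type*} [Fintype V] [DecidableEq V] (G : SimpleGraph V) [DecidableRel G.Adj]
    (hG : G.IsAcyclic) (τ γ : ℝ)
    (x0 : V → Fin 3) (i j k : V)
    (hik : i ≠ k)
    (hadj₁ : G.Adj i j) (hadj₂ : G.Adj j k)
    (t : ℝ) :
    sirP3 G τ γ x0 i j k 1 0 0 t * sirP1 G τ γ x0 j 0 t
      = sirP2 G τ γ x0 i j 1 0 t * sirP2 G τ γ x0 j k 0 0 t ∧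
    sirP3 G τ γ x0 i j k 1 0 1 t * sirP1 G τ γ x0 j 0 t
      = sirP2 G τ γ x0 i j 1 0 t * sirP2 G τ γ x0 j k 0 1 t := by
  classical
  obtain ⟨A, hiA, hjA, hkA, hA⟩ := hG.exists_separation hadj₁ hadj₂ hik
  obtain ⟨FA, FB, hF⟩ := exists_sirP_glue_eq_mul G τ γ hjA hA x0 t
  have marginal := sum_filter_glue_eq_mul hF hjA hiA hkA hadj₂.ne'
  have hISC := fun C => marginal (· = 1) (· = C)
  have hS := marginal (fun _ => True) (fun _ => True)
  have hIS := marginal (· = 1) (fun _ => True)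
  have hSC := fun C => marginal (fun _ => True) (· = C)
  simp only [true_and, and_true, Finset.filter_true] at hS hIS hSC
  simp only [sirP1, sirP2, sirP3, hISC, hS, hIS, hSC]
  constructor <;> ring

/-- On an acyclic graph, for Markovian SIR dynamics with pure initial condition, the
pair-based (unclustered) moment closure is exact on the states `ISS` and `ISI`. -/
theorem sir_pair_closure_exact_on_trees
    {V : Type*} [Fintype V] [DecidableEq V] (G : SimpleGraph V) [DecidableRel G.Adj]
    (hG : G.IsAcyclic) (τ γ : ℝ) (hτ : 0 < τ) (hγ : 0 ≤ γ)
    (x0 : V → Fin 3) (i j k : V)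
    (hij : i ≠ j) (hjk : j ≠ k) (hik : i ≠ k)
    (hadj₁ : G.Adj i j) (hadj₂ : G.Adj j k)
    (t : ℝ) (ht : 0 ≤ t) :
    sirP3 G τ γ x0 i j k 1 0 0 t * sirP1 G τ γ x0 j 0 t
      = sirP2 G τ γ x0 i j 1 0 t * sirP2 G τ γ x0 j k 0 0 t ∧
    sirP3 G τ γ x0 i j k 1 0 1 t * sirP1 G τ γ x0 j 0 t
      = sirP2 G τ γ x0 i j 1 0 t * sirP2 G τ γ x0 j k 0 1 t :=
  sir_pair_closure_exact_on_trees_general G hG τ γ x0 i j k hik hadj₁ hadj₂ t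
end

section
/- For Markovian SIR dynamics with infection rate τ > 0 and recovery rate γ ≥ 0 on the open triplet, started from the pure initial configuration (S, I, S), the unclustered closure is exact on all states whose middle node is still infectious: for all A, C ∈ {S, I} and all t ≥ 0, P_{123}(A,I,C;t) · P_2(I;t) = P_{12}(A,I;t) · P_{23}(I,C;t). -/
/-!
States only move up along S < I < R, so the SIR generator is block triangular with respect to the
state of any one node, and the diagonal block of `exp (t • Q)` where the middle node is infectious
is `exp (t • Q_I)` for the corresponding block `Q_I` of `Q`. On that block the two leaves evolve
independently, each infected at rate `τ` by the middle node and recovering at rate `γ`, while the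
middle node leaves it at rate `γ`: the block is `K ⊗ 1 + 1 ⊗ K - γ`. Hence
`p_t(a, I, c) = e^{-γt} u_t(a) u_t(c)` with `u_t = exp (t • K)` started from S, and summing this
product form over the leaves gives the closure identity.
-/

open Finset

/-- The open triplet: the graph on nodes `{0,1,2}` (representing `1,2,3`) with edges
`{0,1}` and `{1,2}`; node `1` is the middle node. -/
def openTriplet : SimpleGraph (Fin 3) where
  Adj i j := i ≠ j ∧ (i = 1 ∨ j = 1)
  symm := ⟨fun _ _ h => ⟨h.1.symm, h.2.symm⟩⟩
  loopless := ⟨fun _ h => h.1 rfl⟩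

instance : DecidableRel openTriplet.Adj :=
  fun i j => inferInstanceAs (Decidable (i ≠ j ∧ (i = 1 ∨ j = 1)))

open scoped Kronecker

theorem Matrix.BlockTriangular.smul {m α R S : Type*} [LT α] [Zero R] [SMulZeroClass S R]
    {M : Matrix m m R} {b : m → α} (hM : M.BlockTriangular b) (c : S) :
    (c • M).BlockTriangular b := fun _ _ h => by rw [Matrix.smul_apply, hM h, smul_zero]

section BlockTriangular
variable {m α R : Type*} [Fintype m] [LinearOrder α] {b : m → α}
open Matrix

theorem Matrix.BlockTriangular.toSquareBlock_mul [NonUnitalNonAssocSemiring R]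
    {M N : Matrix m m R}
    (hM : M.BlockTriangular b) (hN : N.BlockTriangular b) (k : α) :
    (M * N).toSquareBlock b k = M.toSquareBlock b k * N.toSquareBlock b k := by
  ext i j
  have hout : ∑ z : {z // b z ≠ k}, M i z * N z j = 0 := by
    refine Finset.sum_eq_zero fun z _ => ?_
    rcases lt_or_gt_of_ne z.2 with hz | hz
    · rw [hM (hz.trans_eq i.2.symm), zero_mul]
    · rw [hN (j.2.trans_lt hz), mul_zero]
  simp only [toSquareBlock_def, of_apply, mul_apply]
  rw [← Fintype.sum_subtype_add_sum_subtype (fun z => b z = k), hout, add_zero]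

theorem Matrix.BlockTriangular.toSquareBlock_pow [DecidableEq m] [Semiring R] {M : Matrix m m R}
    (hM : M.BlockTriangular b) (k : α) (n : ℕ) :
    (M ^ n).toSquareBlock b k = M.toSquareBlock b k ^ n := by
  induction n with
  | zero => ext i j; simp [toSquareBlock_def, one_apply, Subtype.ext_iff]
  | succ n ih => rw [pow_succ, (hM.pow n).toSquareBlock_mul hM, ih, pow_succ]

end BlockTriangular

theorem Continuous.matrix_kronecker {X l m n p R : Type*} [TopologicalSpace X]
    [TopologicalSpace R] [Mul R] [ContinuousMul R] {A : X → Matrix l m R} {B : X → Matrix n p R}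
    (hA : Continuous A) (hB : Continuous B) : Continuous fun x => A x ⊗ₖ B x :=
  continuous_matrix fun i j => (hA.matrix_elem i.1 j.1).mul (hB.matrix_elem i.2 j.2)

section MatrixExp

open Matrix

attribute [local instance] Matrix.linftyOpNormedRing Matrix.linftyOpNormedAlgebra

variable {m n α 𝕜 : Type*} [Fintype m] [DecidableEq m] [Fintype n] [DecidableEq n] [RCLike 𝕜]

theorem Matrix.exp_submatrix_equiv (A : Matrix m m 𝕜) (e : n ≃ m) :
    NormedSpace.exp (A.submatrix e e) = (NormedSpace.exp A).submatrix e e :=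
  (NormedSpace.map_exp (reindexAlgEquiv 𝕜 𝕜 e.symm) (continuous_id.matrix_reindex _ _) A).symm

theorem Matrix.BlockTriangular.toSquareBlock_exp [LinearOrder α] {b : m → α}
    {M : Matrix m m 𝕜} (hM : M.BlockTriangular b) (k : α) :
    (NormedSpace.exp M).toSquareBlock b k = NormedSpace.exp (M.toSquareBlock b k) := by
  have hsmul (c : 𝕜) (A : Matrix m m 𝕜) :
      (c • A).toSquareBlock b k = c • A.toSquareBlock b k := rfl
  have h := NormedSpace.exp_series_hasSum_exp' (𝕂 := 𝕜) M
  have hblock : HasSum (fun i => ((i.factorial⁻¹ : 𝕜) • M ^ i).toSquareBlock b k)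
      ((NormedSpace.exp M).toSquareBlock b k) :=
    Pi.hasSum.2 fun i => Pi.hasSum.2 fun j => Pi.hasSum.1 (Pi.hasSum.1 h i) j
  simp only [hsmul, hM.toSquareBlock_pow] at hblock
  rw [← hblock.tsum_eq, NormedSpace.exp_eq_tsum 𝕜]

theorem Matrix.exp_kronecker_one_s3 (A : Matrix m m 𝕜) :
    NormedSpace.exp (A ⊗ₖ (1 : Matrix n n 𝕜)) = NormedSpace.exp A ⊗ₖ 1 := by
  let f : Matrix m m 𝕜 →+* Matrix (m × n) (m × n) 𝕜 :=
    { toFun X := X ⊗ₖ 1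
      map_one' := one_kronecker_one
      map_mul' X Y := by rw [← mul_kronecker_mul, one_mul]
      map_zero' := zero_kronecker _
      map_add' X Y := add_kronecker X Y _ }
  exact (NormedSpace.map_exp f (continuous_id.matrix_kronecker continuous_const) A).symm

theorem Matrix.exp_one_kronecker_s3 (B : Matrix n n 𝕜) :
    NormedSpace.exp ((1 : Matrix m m 𝕜) ⊗ₖ B) = 1 ⊗ₖ NormedSpace.exp B := by
  let f : Matrix n n 𝕜 →+* Matrix (m × n) (m × n) 𝕜 :=
    { toFun X := 1 ⊗ₖ X
      map_one' := one_kronecker_one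
      map_mul' X Y := by rw [← mul_kronecker_mul, one_mul]
      map_zero' := kronecker_zero _
      map_add' X Y := kronecker_add _ X Y }
  exact (NormedSpace.map_exp f (continuous_const.matrix_kronecker continuous_id) B).symm

theorem Matrix.exp_kroneckerSum (A : Matrix m m 𝕜) (B : Matrix n n 𝕜) :
    NormedSpace.exp (A ⊗ₖ 1 + 1 ⊗ₖ B) = NormedSpace.exp A ⊗ₖ NormedSpace.exp B := by
  have hcomm : Commute (A ⊗ₖ (1 : Matrix n n 𝕜)) ((1 : Matrix m m 𝕜) ⊗ₖ B) := by
    simp only [Commute, SemiconjBy, ← mul_kronecker_mul, one_mul, mul_one]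
  rw [exp_add_of_commute _ _ hcomm, exp_kronecker_one_s3, exp_one_kronecker_s3, ← mul_kronecker_mul,
    one_mul, mul_one]

theorem Matrix.exp_sub_smul_one (X : Matrix m m ℝ) (c : ℝ) :
    NormedSpace.exp (X - c • 1) = Real.exp (-c) • NormedSpace.exp X := by
  have hshift : X - c • 1 = (-c) • 1 + X := by rw [neg_smul]; abel
  rw [hshift, exp_add_of_commute _ _ ((Commute.one_left X).smul_left _), smul_one_eq_diagonal,
    exp_diagonal, Pi.exp_def, ← Real.exp_eq_exp_ℝ, ← smul_one_eq_diagonal, smul_mul_assoc,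
    one_mul]

end MatrixExp

theorem agree_off_and_iff_eq_update {α β : Type*} [DecidableEq α] {x y : α → β} {i : α}
    {r s : β} :
    ((∀ j, j ≠ i → x j = y j) ∧ x i = r ∧ y i = s) ↔ (x i = r ∧ y = Function.update x i s) := by
  rw [Function.eq_update_iff]
  constructor
  · rintro ⟨hagree, hr, hs⟩; exact ⟨hr, hs, fun j hj => (hagree j hj).symm⟩
  · rintro ⟨hr, hs, hagree⟩; exact ⟨fun j hj => (hagree j hj).symm, hr, hs⟩

theorem Fintype.sum_fin_three_arrow {β M : Type*} [Fintype β] [AddCommMonoid M]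
    (f : (Fin 3 → β) → M) : ∑ x, f x = ∑ a, ∑ b, ∑ c, f ![a, b, c] := by
  let e : (Fin 3 → β) ≃ β × β × β :=
    { toFun x := (x 0, x 1, x 2)
      invFun p := ![p.1, p.2.1, p.2.2]
      left_inv x := by funext i; fin_cases i <;> rfl
      right_inv _ := rfl }
  simp only [← Fintype.sum_prod_type']
  exact Fintype.sum_equiv e _ _ fun x => congrArg f (e.left_inv x).symm

-- Phrased through the coordinates so that the filter's decidability instance stays well-typed
-- after substituting `x = ![a, b, c]`.
theorem Finset.sum_filter_fin_three_arrow {β M : Type*} [Fintype β] [AddCommMonoid M]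
    (P : β → β → β → Prop) [∀ a b c, Decidable (P a b c)] (f : (Fin 3 → β) → M) :
    ∑ x ∈ univ.filter (fun x => P (x 0) (x 1) (x 2)), f x
      = ∑ a, ∑ b, ∑ c, if P a b c then f ![a, b, c] else 0 := by
  rw [Finset.sum_filter, Fintype.sum_fin_three_arrow]
  rfl

section Generator

variable {V : Type*} [Fintype V] [DecidableEq V] (G : SimpleGraph V) [DecidableRel G.Adj]
  (τ γ : ℝ)

theorem sirGen_blockTriangular (v : V) : (sirGen G τ γ).BlockTriangular (· v) := by
  intro x y hlt
  have hxy : x ≠ y := by rintro rfl; exact lt_irrefl _ hlt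
  have no_step_down (i : V) (r s : Fin 3) (hrs : r ≤ s) :
      ¬((∀ j, j ≠ i → x j = y j) ∧ x i = r ∧ y i = s) := by
    rintro ⟨hagree, rfl, rfl⟩
    rcases eq_or_ne v i with rfl | hvi
    · exact hlt.not_ge hrs
    · exact hlt.ne (hagree v hvi).symm
  rw [sirGen, if_neg hxy, sirRate]
  refine Finset.sum_eq_zero fun i _ => ?_
  rw [if_neg (no_step_down i 0 1 (by decide)), if_neg (no_step_down i 1 2 (by decide)), add_zero]

noncomputable def sirExitRate (x : V → Fin 3) : ℝ :=
  ∑ i, ((if x i = 0 then τ * ((univ.filter fun j => G.Adj i j ∧ x j = 1).card : ℝ) else 0)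
    + (if x i = 1 then γ else 0))

theorem sirRate_self (x : V → Fin 3) : sirRate G τ γ x x = 0 := by
  refine Finset.sum_eq_zero fun i _ => ?_
  rw [if_neg, if_neg, add_zero]
  · rintro ⟨-, h1, h2⟩; exact absurd (h1.symm.trans h2) (by decide)
  · rintro ⟨-, h0, h1⟩; exact absurd (h0.symm.trans h1) (by decide)

theorem sum_sirRate (x : V → Fin 3) : ∑ y, sirRate G τ γ x y = sirExitRate G τ γ x := by
  simp only [sirRate, sirExitRate, agree_off_and_iff_eq_update]
  rw [Finset.sum_comm]
  refine Finset.sum_congr rfl fun i _ => ?_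
  simp [Finset.sum_add_distrib, ite_and]

theorem sirGen_apply (x y : V → Fin 3) :
    sirGen G τ γ x y = if x = y then -sirExitRate G τ γ x else sirRate G τ γ x y := by
  rw [sirGen]
  split_ifs
  · rw [Finset.sum_erase_eq_sub (Finset.mem_univ x), sirRate_self, sub_zero, sum_sirRate]
  · rfl

end Generator

section ThreeNodes

variable {G : SimpleGraph (Fin 3)} [DecidableRel G.Adj] {τ γ : ℝ} {x0 : Fin 3 → Fin 3}
  {t : ℝ}

theorem sirP3_eq_sirP (A B C : Fin 3) :
    sirP3 G τ γ x0 0 1 2 A B C t = sirP G τ γ x0 t ![A, B, C] := by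
  rw [sirP3, Finset.sum_filter_fin_three_arrow (fun a b c => a = A ∧ b = B ∧ c = C)]
  simp [ite_and]

theorem sirP2_zero_one_eq_sum (A B : Fin 3) :
    sirP2 G τ γ x0 0 1 A B t = ∑ c, sirP G τ γ x0 t ![A, B, c] := by
  rw [sirP2, Finset.sum_filter_fin_three_arrow (fun a b _ => a = A ∧ b = B)]
  simp [ite_and]

theorem sirP2_one_two_eq_sum (B C : Fin 3) :
    sirP2 G τ γ x0 1 2 B C t = ∑ a, sirP G τ γ x0 t ![a, B, C] := by
  rw [sirP2, Finset.sum_filter_fin_three_arrow (fun _ b c => b = B ∧ c = C)]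
  simp [ite_and]

theorem sirP1_one_eq_sum (B : Fin 3) :
    sirP1 G τ γ x0 1 B t = ∑ a, ∑ c, sirP G τ γ x0 t ![a, B, c] := by
  rw [sirP1, Finset.sum_filter_fin_three_arrow (fun _ b _ => b = B)]
  simp

theorem sirP3_mul_sirP1_eq_of_product_form {B : Fin 3} (κ : ℝ) (f g : Fin 3 → ℝ)
    (h : ∀ a c, sirP G τ γ x0 t ![a, B, c] = κ * f a * g c) (A C : Fin 3) :
    sirP3 G τ γ x0 0 1 2 A B C t * sirP1 G τ γ x0 1 B t
      = sirP2 G τ γ x0 0 1 A B t * sirP2 G τ γ x0 1 2 B C t := by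
  simp only [sirP3_eq_sirP, sirP1_one_eq_sum, sirP2_zero_one_eq_sum, sirP2_one_two_eq_sum, h,
    ← Finset.mul_sum, ← Finset.sum_mul]
  ring

end ThreeNodes

def middleI : Fin 3 × Fin 3 ≃ {x : Fin 3 → Fin 3 // x 1 = 1} where
  toFun p := ⟨![p.1, 1, p.2], rfl⟩
  invFun x := (x.1 0, x.1 2)
  left_inv _ := rfl
  right_inv x := Subtype.ext <| funext fun i => by fin_cases i <;> simp [x.2]

theorem coe_middleI_apply (p : Fin 3 × Fin 3) : (middleI p : Fin 3 → Fin 3) = ![p.1, 1, p.2] :=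
  rfl

/-- Generator of a single leaf whose only neighbour stays infectious. -/
def leafGen (τ γ : ℝ) : Matrix (Fin 3) (Fin 3) ℝ := !![-τ, τ, 0; 0, -γ, γ; 0, 0, 0]

theorem openTriplet_card_infected_adj_of_ne_one {i : Fin 3} (hi : i ≠ 1) (a c : Fin 3) :
    (univ.filter fun j => openTriplet.Adj i j ∧ ![a, 1, c] j = 1).card = 1 := by
  revert i a c; decide

open Matrix in
theorem sirGen_openTriplet_middleI_block (τ γ : ℝ) :
    ((sirGen openTriplet τ γ).toSquareBlock (· 1) 1).submatrix middleI middleI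
      = leafGen τ γ ⊗ₖ 1 + 1 ⊗ₖ leafGen τ γ - γ • 1 := by
  ext ⟨a, c⟩ ⟨a', c'⟩
  simp only [submatrix_apply, toSquareBlock_def, of_apply, coe_middleI_apply,
    sirGen_apply, Matrix.sub_apply, Matrix.add_apply, Matrix.smul_apply, kroneckerMap_apply]
  simp only [sirExitRate, sirRate, Fin.sum_univ_three,
    openTriplet_card_infected_adj_of_ne_one (show (0 : Fin 3) ≠ 1 by decide),
    openTriplet_card_infected_adj_of_ne_one (show (2 : Fin 3) ≠ 1 by decide)]
  fin_cases a <;> fin_cases c <;> fin_cases a' <;> fin_cases c' <;>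
    simp +decide [leafGen, one_apply] <;> ring

theorem sirP_openTriplet_middleI_eq_product (τ γ t : ℝ) (a c : Fin 3) :
    sirP openTriplet τ γ ![0, 1, 0] t ![a, 1, c]
      = Real.exp (-(γ * t)) * NormedSpace.exp (t • leafGen τ γ) 0 a
          * NormedSpace.exp (t • leafGen τ γ) 0 c := by
  have hQ := (sirGen_blockTriangular openTriplet τ γ 1).smul t
  have hgen : t • (leafGen τ γ ⊗ₖ 1 + 1 ⊗ₖ leafGen τ γ - γ • 1)
      = (t • leafGen τ γ) ⊗ₖ 1 + 1 ⊗ₖ (t • leafGen τ γ) - (γ * t) • 1 := by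
    rw [smul_sub, smul_add, Matrix.smul_kronecker, Matrix.kronecker_smul, smul_smul, mul_comm]
  calc sirP openTriplet τ γ ![0, 1, 0] t ![a, 1, c]
      = ((NormedSpace.exp (t • sirGen openTriplet τ γ)).toSquareBlock (· 1) 1).submatrix
          middleI middleI (0, 0) (a, c) := rfl
    _ = (NormedSpace.exp (t • (leafGen τ γ ⊗ₖ 1 + 1 ⊗ₖ leafGen τ γ - γ • 1)) :
          Matrix (Fin 3 × Fin 3) (Fin 3 × Fin 3) ℝ) (0, 0) (a, c) := by
      rw [hQ.toSquareBlock_exp, ← Matrix.exp_submatrix_equiv,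
        ← sirGen_openTriplet_middleI_block]
      rfl
    _ = _ := by
      rw [hgen, Matrix.exp_sub_smul_one, Matrix.exp_kroneckerSum, Matrix.smul_apply,
        Matrix.kroneckerMap_apply, smul_eq_mul, mul_assoc]

theorem sir_openTriplet_closure_exact_middle_I_general
    (τ γ : ℝ)
    (A C : Fin 3)
    (t : ℝ) :
    sirP3 openTriplet τ γ ![0, 1, 0] 0 1 2 A 1 C t * sirP1 openTriplet τ γ ![0, 1, 0] 1 1 t
      = sirP2 openTriplet τ γ ![0, 1, 0] 0 1 A 1 t
          * sirP2 openTriplet τ γ ![0, 1, 0] 1 2 1 C t :=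
  sirP3_mul_sirP1_eq_of_product_form _ _ _ (sirP_openTriplet_middleI_eq_product τ γ t) A C

/-- For Markovian SIR dynamics on the open triplet started from `(S,I,S)`, the unclustered
closure is exact on all states whose middle node is still infectious: for `A, C ∈ {S, I}`,
`P₁₂₃(A,I,C) · P₂(I) = P₁₂(A,I) · P₂₃(I,C)`. -/
theorem sir_openTriplet_closure_exact_middle_I
    (τ γ : ℝ) (hτ : 0 < τ) (hγ : 0 ≤ γ)
    (A C : Fin 3) (hA : A = 0 ∨ A = 1) (hC : C = 0 ∨ C = 1)
    (t : ℝ) (ht : 0 ≤ t) :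
    sirP3 openTriplet τ γ ![0, 1, 0] 0 1 2 A 1 C t * sirP1 openTriplet τ γ ![0, 1, 0] 1 1 t
      = sirP2 openTriplet τ γ ![0, 1, 0] 0 1 A 1 t
          * sirP2 openTriplet τ γ ![0, 1, 0] 1 2 1 C t :=
  sir_openTriplet_closure_exact_middle_I_general τ γ A C t
end

section
/- For Markovian SIR dynamics with infection rate τ = 1 and recovery rate γ = 1 on the open triplet, started from the pure initial configuration (I, S, S), the unclustered closure fails to be exact on the state IIS: there exists t > 0 such that P_{123}(I,I,S;t) · P_2(I;t) ≠ P_{12}(I,I;t) · P_{23}(I,S;t). -/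
/-!
If the closure were exact for all `t > 0`, the smooth functions `P_{123}(I,I,S) P_2(I)` and
`P_{12}(I,I) P_{23}(I,S)` would have equal derivatives of every order at `t = 0`. Every marginal is
a sum of entries of `exp (t Q)`, so its `n`-th derivative at `0` is the corresponding sum of entries
of `Qⁿ`, an integer that can be computed exactly. By the Leibniz rule the derivatives
of the two products agree up to order three, but their fourth derivatives at `0` are `194` and `192`.
-/

open Finset

theorem iteratedDeriv_eq_of_eqOn_Ioi {E : Type*} [NormedAddCommGroup E] [NormedSpace ℝ E]
    {f g : ℝ → E} {n : ℕ} {a : ℝ} (hf : ContDiff ℝ n f) (hg : ContDiff ℝ n g)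
    (h : Set.EqOn f g (Set.Ioi a)) : iteratedDeriv n f a = iteratedDeriv n g a :=
  (h.iteratedDeriv_of_isOpen isOpen_Ioi n).closure (hf.continuous_iteratedDeriv' n)
    (hg.continuous_iteratedDeriv' n) (by simp)

theorem sum_choose_mul_iteratedDeriv_eq_of_eqOn_Ioi {f g u v : ℝ → ℝ} {n : ℕ} {a : ℝ}
    (hf : ContDiff ℝ n f) (hg : ContDiff ℝ n g) (hu : ContDiff ℝ n u) (hv : ContDiff ℝ n v)
    (h : Set.EqOn (fun t => f t * g t) (fun t => u t * v t) (Set.Ioi a)) :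
    ∑ k ∈ range (n + 1), n.choose k * iteratedDeriv k f a * iteratedDeriv (n - k) g a =
      ∑ k ∈ range (n + 1), n.choose k * iteratedDeriv k u a * iteratedDeriv (n - k) v a := by
  rw [← iteratedDeriv_fun_mul hf.contDiffAt hg.contDiffAt,
    ← iteratedDeriv_fun_mul hu.contDiffAt hv.contDiffAt]
  exact iteratedDeriv_eq_of_eqOn_Ioi (hf.mul hg) (hu.mul hv) h

namespace Matrix

variable {ι : Type*} [Fintype ι] [DecidableEq ι] (A : Matrix ι ι ℝ) (i : ι) (s : Finset ι)

open scoped Norms.Operator in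
theorem hasDerivAt_sum_exp_smul_mul_apply (B : Matrix ι ι ℝ) (t : ℝ) :
    HasDerivAt (fun u : ℝ => ∑ x ∈ s, (NormedSpace.exp (u • A) * B) i x)
      (∑ x ∈ s, (NormedSpace.exp (t • A) * (A * B)) i x) t := by
  have hexp := (hasDerivAt_exp_smul_const (𝕂 := ℝ) A t).mul_const B
  rw [mul_assoc] at hexp
  exact HasDerivAt.fun_sum fun x _ =>
    (entryLinearMap ℝ ℝ i x).toContinuousLinearMap.hasFDerivAt.comp_hasDerivAt t hexp

theorem iteratedDeriv_sum_exp_smul_apply (n : ℕ) :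
    iteratedDeriv n (fun u : ℝ => ∑ x ∈ s, NormedSpace.exp (u • A) i x) =
      fun t => ∑ x ∈ s, (NormedSpace.exp (t • A) * A ^ n) i x := by
  induction n with
  | zero => simp
  | succ n ih =>
    ext t
    rw [iteratedDeriv_succ, ih, pow_succ', (hasDerivAt_sum_exp_smul_mul_apply A i s _ t).deriv]

open scoped ContDiff in
theorem contDiff_sum_exp_smul_apply :
    ContDiff ℝ ∞ (fun u : ℝ => ∑ x ∈ s, NormedSpace.exp (u • A) i x) :=
  contDiff_of_differentiable_iteratedDeriv fun n _ t => by
    rw [iteratedDeriv_sum_exp_smul_apply]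
    exact (hasDerivAt_sum_exp_smul_mul_apply A i s _ t).differentiableAt

theorem iteratedDeriv_sum_exp_smul_apply_zero (n : ℕ) :
    iteratedDeriv n (fun u : ℝ => ∑ x ∈ s, NormedSpace.exp (u • A) i x) 0 =
      ∑ x ∈ s, (A ^ n) i x := by
  simp [iteratedDeriv_sum_exp_smul_apply]

end Matrix

section IntegerGenerator

variable {V : Type*} [Fintype V] [DecidableEq V] (G : SimpleGraph V) [DecidableRel G.Adj]

/- Integer copies of `sirRate` and `sirGen`: entries of powers of the generator then become
decidable, and are evaluated by the kernel. -/
def sirRateInt (τ γ : ℤ) (x y : V → Fin 3) : ℤ :=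
  ∑ i : V,
    ((if (∀ j, j ≠ i → x j = y j) ∧ x i = 0 ∧ y i = 1 then
        τ * ((Finset.univ.filter (fun j => G.Adj i j ∧ x j = 1)).card : ℤ) else 0)
      + (if (∀ j, j ≠ i → x j = y j) ∧ x i = 1 ∧ y i = 2 then γ else 0))

def sirGenInt (τ γ : ℤ) : Matrix (V → Fin 3) (V → Fin 3) ℤ :=
  fun x y => if x = y then -∑ z ∈ Finset.univ.erase x, sirRateInt G τ γ x z
             else sirRateInt G τ γ x y

theorem sirGen_intCast (τ γ : ℤ) : sirGen G τ γ = (sirGenInt G τ γ).map (Int.castRingHom ℝ) := by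
  ext x y
  simp only [sirGen, sirGenInt, sirRate, sirRateInt, Matrix.map_apply, eq_intCast]
  push_cast [apply_ite (Int.cast : ℤ → ℝ)]
  rfl

def sirMarginalDerivAtZero (τ γ : ℤ) (x0 : V → Fin 3) (s : Finset (V → Fin 3)) (n : ℕ) : ℤ :=
  ∑ x ∈ s, (sirGenInt G τ γ ^ n) x0 x

theorem iteratedDeriv_sum_sirP_zero (τ γ : ℤ) (x0 : V → Fin 3) (s : Finset (V → Fin 3))
    (n : ℕ) :
    iteratedDeriv n (fun t => ∑ x ∈ s, sirP G τ γ x0 t x) 0 =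
      sirMarginalDerivAtZero G τ γ x0 s n := by
  simp only [sirP]
  rw [Matrix.iteratedDeriv_sum_exp_smul_apply_zero, sirGen_intCast, ← Matrix.map_pow]
  simp [sirMarginalDerivAtZero]

end IntegerGenerator

theorem openTriplet_fourthDeriv_IIS_mul_I :
    ∑ k ∈ range (4 + 1), (Nat.choose 4 k : ℤ)
      * sirMarginalDerivAtZero openTriplet 1 1 ![1, 0, 0] {x | x 0 = 1 ∧ x 1 = 1 ∧ x 2 = 0} k
      * sirMarginalDerivAtZero openTriplet 1 1 ![1, 0, 0] {x | x 1 = 1} (4 - k) = 194 := by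
  decide +kernel

theorem openTriplet_fourthDeriv_II_mul_IS :
    ∑ k ∈ range (4 + 1), (Nat.choose 4 k : ℤ)
      * sirMarginalDerivAtZero openTriplet 1 1 ![1, 0, 0] {x | x 0 = 1 ∧ x 1 = 1} k
      * sirMarginalDerivAtZero openTriplet 1 1 ![1, 0, 0] {x | x 1 = 1 ∧ x 2 = 0} (4 - k)
      = 192 := by
  decide +kernel

/-- For Markovian SIR dynamics with `τ = γ = 1` on the open triplet started from `(I,S,S)`,
the unclustered closure fails to be exact on the state `IIS` at some time `t > 0`. -/
theorem sir_openTriplet_closure_fails_IIS :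
    ∃ t : ℝ, 0 < t ∧
      sirP3 openTriplet 1 1 ![1, 0, 0] 0 1 2 1 1 0 t * sirP1 openTriplet 1 1 ![1, 0, 0] 1 1 t
        ≠ sirP2 openTriplet 1 1 ![1, 0, 0] 0 1 1 1 t
            * sirP2 openTriplet 1 1 ![1, 0, 0] 1 2 1 0 t := by
  by_contra! hexact
  have hsmooth (s : Finset (Fin 3 → Fin 3)) :
      ContDiff ℝ 4 fun t => ∑ x ∈ s, sirP openTriplet 1 1 ![1, 0, 0] t x :=
    contDiff_infty.1 (Matrix.contDiff_sum_exp_smul_apply _ _ s) 4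
  have hderiv (s : Finset (Fin 3 → Fin 3)) (n : ℕ) :
      iteratedDeriv n (fun t => ∑ x ∈ s, sirP openTriplet 1 1 ![1, 0, 0] t x) 0 =
        sirMarginalDerivAtZero openTriplet 1 1 ![1, 0, 0] s n := by
    exact_mod_cast iteratedDeriv_sum_sirP_zero openTriplet 1 1 ![1, 0, 0] s n
  have h4 := sum_choose_mul_iteratedDeriv_eq_of_eqOn_Ioi (n := 4)
    (hsmooth _) (hsmooth _) (hsmooth _) (hsmooth _) hexact
  simp only [hderiv] at h4
  have h194_eq_192 : ((194 : ℤ) : ℝ) = (192 : ℤ) := by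
    rw [← openTriplet_fourthDeriv_IIS_mul_I, ← openTriplet_fourthDeriv_II_mul_IS]
    push_cast
    exact h4
  norm_num at h194_eq_192
end

section
/- For Markovian SI dynamics with infection rate τ > 0 on the closed triangle, Kirkwood's closure is exact on every state: for every pure initial configuration x⁰ : {1,2,3} → Fin 2, all A, B, C ∈ Fin 2 and all t ≥ 0, P_{123}(A,B,C;t) · P_1(A;t) · P_2(B;t) · P_3(C;t) = P_{12}(A,B;t) · P_{23}(B,C;t) · P_{13}(A,C;t). -/
open Finset

/-- Rate of a single off-diagonal transition for the Markovian SI model with states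
`0 = S`, `1 = I`: nonzero only if `y` agrees with `x` except at exactly one node `i`,
where `S → I` occurs at rate `τ · #infectious neighbours`. -/
noncomputable def siRate {V : Type*} [Fintype V] [DecidableEq V] (G : SimpleGraph V)
    [DecidableRel G.Adj] (τ : ℝ) (x y : V → Fin 2) : ℝ :=
  ∑ i : V,
    (if (∀ j, j ≠ i → x j = y j) ∧ x i = 0 ∧ y i = 1 then
        τ * ((Finset.univ.filter (fun j => G.Adj i j ∧ x j = 1)).card : ℝ) else 0)

/-- Generator matrix of the Markovian SI dynamics on configurations `V → Fin 2`. -/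
noncomputable def siGen {V : Type*} [Fintype V] [DecidableEq V] (G : SimpleGraph V)
    [DecidableRel G.Adj] (τ : ℝ) : Matrix (V → Fin 2) (V → Fin 2) ℝ :=
  fun x y => if x = y then -∑ z ∈ Finset.univ.erase x, siRate G τ x z
             else siRate G τ x y

/-- Distribution at time `t` started from the pure configuration `x0`. -/
noncomputable def siP {V : Type*} [Fintype V] [DecidableEq V] (G : SimpleGraph V)
    [DecidableRel G.Adj] (τ : ℝ) (x0 : V → Fin 2) (t : ℝ) (x : V → Fin 2) : ℝ :=
  NormedSpace.exp (t • siGen G τ) x0 x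

/-- Single-node marginal `P_i(A;t)`. -/
noncomputable def siP1 {V : Type*} [Fintype V] [DecidableEq V] (G : SimpleGraph V)
    [DecidableRel G.Adj] (τ : ℝ) (x0 : V → Fin 2) (i : V) (A : Fin 2) (t : ℝ) : ℝ :=
  ∑ x ∈ Finset.univ.filter (fun x : V → Fin 2 => x i = A), siP G τ x0 t x

/-- Pair marginal `P_{ij}(A,B;t)`. -/
noncomputable def siP2 {V : Type*} [Fintype V] [DecidableEq V] (G : SimpleGraph V)
    [DecidableRel G.Adj] (τ : ℝ) (x0 : V → Fin 2) (i j : V) (A B : Fin 2) (t : ℝ) : ℝ :=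
  ∑ x ∈ Finset.univ.filter (fun x : V → Fin 2 => x i = A ∧ x j = B), siP G τ x0 t x

/-- Triple marginal `P_{ijk}(A,B,C;t)`. -/
noncomputable def siP3 {V : Type*} [Fintype V] [DecidableEq V] (G : SimpleGraph V)
    [DecidableRel G.Adj] (τ : ℝ) (x0 : V → Fin 2) (i j k : V) (A B C : Fin 2) (t : ℝ) : ℝ :=
  ∑ x ∈ Finset.univ.filter (fun x : V → Fin 2 => x i = A ∧ x j = B ∧ x k = C),
    siP G τ x0 t x

/-- The closed triangle: the complete graph on nodes `{0,1,2}` (representing `1,2,3`). -/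
def triangle : SimpleGraph (Fin 3) := ⊤

instance : DecidableRel triangle.Adj :=
  fun i j => inferInstanceAs (Decidable (i ≠ j))

/-!
Infection is irreversible: no transition of the SI generator leads from a configuration in which
node `i` is infected to one in which it is susceptible, so the generator is block triangular for
the predicate `x i = 1`, and then so is its exponential. Likewise the all-susceptible configuration
is absorbing. Hence on three nodes some node is in a deterministic state at all times: an initially
infected node, or any node if none is infected. Every marginal involving a deterministic node `i`
is the indicator of its state times the marginal of the remaining nodes (for `P_i` itself we use
that rows of the generator sum to zero, so `p_t` has total mass one), and after this substitution
Kirkwood's identity is a ring identity.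
-/

open scoped Matrix

theorem NormedSpace.exp_mul_eq_self_of_mul_eq_zero {𝕂 𝔸 : Type*} [NontriviallyNormedField 𝕂]
    [CharZero 𝕂] [ContinuousSMul ℚ 𝕂] [NormedRing 𝔸] [NormedAlgebra 𝕂 𝔸] [CompleteSpace 𝔸]
    {x y : 𝔸} (h : x * y = 0) : exp x * y = y := by
  have hterm : ∀ n, n ≠ 0 → ((n.factorial⁻¹ : 𝕂) • x ^ n) * y = 0 := by
    intro n hn
    rw [smul_mul_assoc, ← Nat.succ_pred_eq_of_ne_zero hn, pow_succ, mul_assoc, h, mul_zero,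
      smul_zero]
  exact ((exp_series_hasSum_exp' (𝕂 := 𝕂) x).mul_right y).unique
    (by simpa using hasSum_single 0 hterm)

open scoped Matrix.Norms.Operator in
theorem Matrix.exp_mulVec_eq_self_of_mulVec_eq_zero {m : Type*} [Fintype m] [DecidableEq m]
    {A : Matrix m m ℝ} {v : m → ℝ} (h : A *ᵥ v = 0) : NormedSpace.exp A *ᵥ v = v := by
  have : CompleteSpace (Matrix m m ℝ) := FiniteDimensional.complete ℝ _
  have hB : A * of (fun i (_ : m) => v i) = 0 := by
    ext i j
    simpa [mul_apply, mulVec, dotProduct] using congrFun h i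
  funext i
  have := congrArg (fun M : Matrix m m ℝ => M i i)
    (NormedSpace.exp_mul_eq_self_of_mul_eq_zero (𝕂 := ℝ) hB)
  simp only [mul_apply, of_apply] at this
  exact this

section SI

variable {V : Type*} [Fintype V] [DecidableEq V] {G : SimpleGraph V} [DecidableRel G.Adj]
  {τ : ℝ}

theorem siGen_mulVec_one : siGen G τ *ᵥ 1 = 0 := by
  funext x
  have hoff : ∀ y ∈ univ.erase x, siGen G τ x y = siRate G τ x y := fun y hy =>
    if_neg (ne_of_mem_erase hy).symm
  simp only [Matrix.mulVec, dotProduct, Pi.one_apply, mul_one, Pi.zero_apply]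
  rw [← add_sum_erase _ _ (mem_univ x), sum_congr rfl hoff]
  simp [siGen]

theorem sum_siP (x0 : V → Fin 2) (t : ℝ) : ∑ x, siP G τ x0 t x = 1 := by
  have h : (t • siGen G τ) *ᵥ 1 = 0 := by rw [Matrix.smul_mulVec, siGen_mulVec_one, smul_zero]
  simpa [Matrix.mulVec, dotProduct, siP] using
    congrFun (Matrix.exp_mulVec_eq_self_of_mulVec_eq_zero h) x0

theorem siGen_blockTriangular_apply_eq_one (i : V) :
    (siGen G τ).BlockTriangular (fun x => x i = 1) := by
  intro x y hxy
  obtain ⟨-, hx, hy⟩ : _ ∧ x i = 1 ∧ ¬ y i = 1 := by simpa [lt_iff_le_not_ge] using hxy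
  have hne : x ≠ y := by rintro rfl; exact hy hx
  simp only [siGen, if_neg hne, siRate]
  refine Finset.sum_eq_zero fun l _ => if_neg ?_
  rintro ⟨hagree, hxl, -⟩
  by_cases hl : i = l
  · subst hl; simp [hx] at hxl
  · exact hy (hagree i hl ▸ hx)

theorem siGen_blockTriangular_eq_zero : (siGen G τ).BlockTriangular (fun x => x = 0) := by
  intro x y hxy
  obtain ⟨-, rfl, hy⟩ : _ ∧ x = 0 ∧ ¬ y = 0 := by simpa [lt_iff_le_not_ge] using hxy
  simp [siGen, Ne.symm hy, siRate]

/-- Prop is ordered by implication, so `b x < b x0` means `b x0 ∧ ¬ b x`. -/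
theorem siP_eq_zero_of_blockTriangular {b : (V → Fin 2) → Prop}
    (hQ : (siGen G τ).BlockTriangular b) {x0 x : V → Fin 2} (t : ℝ) (h : b x < b x0) :
    siP G τ x0 t x = 0 :=
  Matrix.BlockTriangular.exp (fun _ _ hxy => by simp [hQ hxy] :
    (t • siGen G τ).BlockTriangular b) h

theorem apply_eq_one_of_siP_ne_zero {x0 x : V → Fin 2} {t : ℝ} {i : V} (h0 : x0 i = 1)
    (hx : siP G τ x0 t x ≠ 0) : x i = 1 := by
  by_contra hxi
  exact hx (siP_eq_zero_of_blockTriangular (siGen_blockTriangular_apply_eq_one i) t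
    (by simp [lt_iff_le_not_ge, hxi, h0]))

theorem eq_zero_of_siP_zero_ne_zero {x : V → Fin 2} {t : ℝ} (hx : siP G τ 0 t x ≠ 0) :
    x = 0 := by
  by_contra hx0
  exact hx (siP_eq_zero_of_blockTriangular siGen_blockTriangular_eq_zero t
    (by simp [lt_iff_le_not_ge, hx0]))

end SI

theorem Finset.sum_filter_eq_ite_of_ne_zero {α M : Type*} [Fintype α] [AddCommMonoid M]
    {f : α → M} {p q : α → Prop} [DecidablePred p] [DecidablePred q] {c : Prop} [Decidable c]
    (h : ∀ x, f x ≠ 0 → (p x ↔ c ∧ q x)) :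
    ∑ x with p x, f x = if c then ∑ x with q x, f x else 0 := by
  rw [sum_filter, sum_filter]
  split_ifs with hc
  · refine sum_congr rfl fun x _ => ?_
    rcases eq_or_ne (f x) 0 with hfx | hfx <;> simp [hfx, h x, hc]
  · refine sum_eq_zero fun x _ => ?_
    rcases eq_or_ne (f x) 0 with hfx | hfx <;> simp [hfx, h x, hc]

section Kirkwood

variable {V : Type*} [Fintype V] [DecidableEq V] (G : SimpleGraph V) [DecidableRel G.Adj]
  (τ : ℝ) (x0 : V → Fin 2) (i j k : V) (A B C : Fin 2) (t : ℝ)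

def SIKirkwoodExact : Prop :=
  siP3 G τ x0 i j k A B C t * siP1 G τ x0 i A t * siP1 G τ x0 j B t * siP1 G τ x0 k C t
    = siP2 G τ x0 i j A B t * siP2 G τ x0 j k B C t * siP2 G τ x0 i k A C t

theorem siP2_comm : siP2 G τ x0 i j A B t = siP2 G τ x0 j i B A t := by
  simp only [siP2, and_comm]

theorem siP3_rotate : siP3 G τ x0 j k i B C A t = siP3 G τ x0 i j k A B C t := by
  simp only [siP3, and_comm, and_left_comm]

variable {G τ x0 i j k A B C t}

theorem SIKirkwoodExact.rotate (h : SIKirkwoodExact G τ x0 j k i B C A t) :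
    SIKirkwoodExact G τ x0 i j k A B C t := by
  rw [SIKirkwoodExact, siP3_rotate, siP2_comm G τ x0 k i, siP2_comm G τ x0 j i] at h
  rw [SIKirkwoodExact]
  linear_combination h

theorem siKirkwoodExact_of_apply_eq {a : Fin 2}
    (hdet : ∀ x, siP G τ x0 t x ≠ 0 → x i = a) : SIKirkwoodExact G τ x0 i j k A B C t := by
  have h3 : siP3 G τ x0 i j k A B C t = if a = A then siP2 G τ x0 j k B C t else 0 :=
    sum_filter_eq_ite_of_ne_zero fun x hx => by rw [hdet x hx]
  have h2 : ∀ n N, siP2 G τ x0 i n A N t = if a = A then siP1 G τ x0 n N t else 0 :=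
    fun n N => sum_filter_eq_ite_of_ne_zero fun x hx => by rw [hdet x hx]
  have h1 : siP1 G τ x0 i A t = if a = A then 1 else 0 := by
    rw [siP1, sum_filter_eq_ite_of_ne_zero (q := fun _ => True) (c := a = A)
      fun x hx => by simp [hdet x hx]]
    simp [sum_siP]
  rw [SIKirkwoodExact, h3, h2, h2, h1]
  split_ifs <;> ring

theorem siKirkwoodExact_of_apply_eq_of_mem {l : V} {a : Fin 2} (hl : l = i ∨ l = j ∨ l = k)
    (hdet : ∀ x, siP G τ x0 t x ≠ 0 → x l = a) : SIKirkwoodExact G τ x0 i j k A B C t := by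
  rcases hl with rfl | rfl | rfl
  · exact siKirkwoodExact_of_apply_eq hdet
  · exact (siKirkwoodExact_of_apply_eq hdet).rotate
  · exact (siKirkwoodExact_of_apply_eq hdet).rotate.rotate

end Kirkwood

theorem siKirkwoodExact_fin_three (G : SimpleGraph (Fin 3)) [DecidableRel G.Adj] (τ : ℝ)
    (x0 : Fin 3 → Fin 2) (A B C : Fin 2) (t : ℝ) : SIKirkwoodExact G τ x0 0 1 2 A B C t := by
  by_cases hinf : ∃ l, x0 l = 1
  · obtain ⟨l, hl⟩ := hinf
    exact siKirkwoodExact_of_apply_eq_of_mem (l := l) (by fin_cases l <;> simp)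
      fun x hx => apply_eq_one_of_siP_ne_zero hl hx
  · obtain rfl : x0 = 0 := funext fun l => by
      have := not_exists.mp hinf l
      simp only [Pi.zero_apply]
      omega
    exact siKirkwoodExact_of_apply_eq fun x hx => by rw [eq_zero_of_siP_zero_ne_zero hx]

theorem si_triangle_kirkwood_exact_general
    (τ : ℝ) (x0 : Fin 3 → Fin 2) (A B C : Fin 2) (t : ℝ) :
    siP3 triangle τ x0 0 1 2 A B C t * siP1 triangle τ x0 0 A t * siP1 triangle τ x0 1 B t
        * siP1 triangle τ x0 2 C t
      = siP2 triangle τ x0 0 1 A B t * siP2 triangle τ x0 1 2 B C t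
          * siP2 triangle τ x0 0 2 A C t :=
  siKirkwoodExact_fin_three triangle τ x0 A B C t

/-- For Markovian SI dynamics on the closed triangle, Kirkwood's closure is exact on every
state, for every pure initial configuration:
`P₁₂₃(A,B,C) · P₁(A) · P₂(B) · P₃(C) = P₁₂(A,B) · P₂₃(B,C) · P₁₃(A,C)`. -/
theorem si_triangle_kirkwood_exact
    (τ : ℝ) (hτ : 0 < τ) (x0 : Fin 3 → Fin 2) (A B C : Fin 2) (t : ℝ) (ht : 0 ≤ t) :
    siP3 triangle τ x0 0 1 2 A B C t * siP1 triangle τ x0 0 A t * siP1 triangle τ x0 1 B t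
        * siP1 triangle τ x0 2 C t
      = siP2 triangle τ x0 0 1 A B t * siP2 triangle τ x0 1 2 B C t
          * siP2 triangle τ x0 0 2 A C t :=
  si_triangle_kirkwood_exact_general τ x0 A B C t
end

section
/- For Markovian SI dynamics with infection rate τ > 0 on the closed triangle, started from the pure initial configuration (I, S, S), the one-step maximum-entropy closure is exact: for all A, B, C ∈ Fin 2 and all t > 0, P_{123}(A,B,C;t) = P_{12}(A,B;t) · P_{23}(B,C;t) · P_{13}(A,C;t) / ( P_2(B;t) · ∑_{b ∈ Fin 2} P_{12}(A,b;t) · P_{23}(b,C;t) / P_2(b;t) ), where real division follows Lean's convention x/0 = 0. -/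
/-!
Started from `(I, S, S)`, node 1 stays infected forever, because the generator is block
triangular for the order "infected above susceptible" at any node, and so is its exponential.
The law of `(X₁, X₂, X₃)` is therefore that of `(I, X₂, X₃)`, and for such a law the one-step
closure collapses to `P₂₃(b,c) · P₂(b) P₃(c) / (P₂(b) P₃(c))`. Zero denominators do no harm:
the transition probabilities are nonnegative (the generator has nonnegative off-diagonal
entries), so a vanishing marginal forces the corresponding joint probability to vanish.
-/

open Finset

open NormedSpace

namespace Matrix

theorem BlockTriangular.smul_s8 {m α R S : Type*} [LT α] [Zero R] [SMulZeroClass S R]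
    {M : Matrix m m R} {b : m → α} (hM : M.BlockTriangular b) (s : S) :
    (s • M).BlockTriangular b :=
  fun _ _ h => by rw [smul_apply, hM h, smul_zero]

variable {m : Type*} [Fintype m] [DecidableEq m]

open scoped Norms.Operator in
theorem exp_apply_nonneg {N : Matrix m m ℝ} (hN : ∀ i j, 0 ≤ N i j) (i j : m) :
    0 ≤ exp N i j :=
  ((exp_series_hasSum_exp' (𝕂 := ℝ) N).map (entryAddMonoidHom ℝ i j)
    (continuous_id.matrix_elem i j)).nonneg fun n => by
      simpa using mul_nonneg (by positivity) (pow_apply_nonneg hN n i j)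

/-- Shifting by a scalar `c` large enough makes `M + c` entrywise nonnegative, and
`exp M = exp (-c) • exp (M + c)`. -/
theorem exp_apply_nonneg_of_offDiag_nonneg {M : Matrix m m ℝ} (hM : ∀ i j, i ≠ j → 0 ≤ M i j)
    (i j : m) : 0 ≤ exp M i j := by
  set c := ∑ k, |M k k|
  set N : Matrix m m ℝ := M + diagonal fun _ => c
  have hN : ∀ i j, 0 ≤ N i j := by
    intro i j
    rcases eq_or_ne i j with rfl | hij
    · have := single_le_sum (fun k _ => abs_nonneg (M k k)) (mem_univ i)
      simp only [N, add_apply, diagonal_apply_eq]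
      linarith [neg_abs_le (M i i)]
    · simpa [N, diagonal_apply_ne _ hij] using hM i j hij
  have hMN : M = (diagonal fun _ => -c) + N := by
    rw [add_left_comm, diagonal_add]
    simp
  have hcomm : Commute (diagonal fun _ => -c) N := scalar_commute (-c) (Commute.all _) N
  rw [hMN, exp_add_of_commute _ _ hcomm, exp_diagonal, diagonal_mul, Pi.coe_exp,
    ← Real.exp_eq_exp_ℝ]
  exact mul_nonneg (Real.exp_pos _).le (exp_apply_nonneg hN i j)

end Matrix

section Marginals

variable {ι κ : Type*} [Fintype ι] [Fintype κ]

theorem sum_sum_filter_eq_sum_filter {P : ι → Prop} [DecidablePred P] {Q : κ → ι → Prop}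
    [∀ c, DecidablePred (Q c)] (g : ι → κ) (hQ : ∀ c x, Q c x ↔ P x ∧ g x = c) (f : ι → ℝ) :
    ∑ c, ∑ x ∈ univ.filter (Q c), f x = ∑ x ∈ univ.filter P, f x := by
  classical
  rw [← sum_fiberwise (univ.filter P) g]
  simp only [filter_filter, hQ]

variable {V : Type*} [Fintype V] [DecidableEq V] (G : SimpleGraph V) [DecidableRel G.Adj]
  (τ : ℝ) (x0 : V → Fin 2) (t : ℝ)

theorem siP2_eq_sum_siP3_right (i j k : V) (A B : Fin 2) :
    siP2 G τ x0 i j A B t = ∑ c, siP3 G τ x0 i j k A B c t :=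
  (sum_sum_filter_eq_sum_filter (fun x => x k) (fun _ _ => by tauto) _).symm

theorem siP2_eq_sum_siP3_left (i j k : V) (B C : Fin 2) :
    siP2 G τ x0 j k B C t = ∑ a, siP3 G τ x0 i j k a B C t :=
  (sum_sum_filter_eq_sum_filter (fun x => x i) (fun _ _ => by tauto) _).symm

theorem siP2_eq_sum_siP3_mid (i j k : V) (A C : Fin 2) :
    siP2 G τ x0 i k A C t = ∑ b, siP3 G τ x0 i j k A b C t :=
  (sum_sum_filter_eq_sum_filter (fun x => x j) (fun _ _ => by tauto) _).symm

theorem siP1_eq_sum_siP2 (i j : V) (B : Fin 2) :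
    siP1 G τ x0 j B t = ∑ a, siP2 G τ x0 i j a B t :=
  (sum_sum_filter_eq_sum_filter (fun x => x i) (fun _ _ => by tauto) _).symm

end Marginals

section OneStepClosure

variable {α β γ : Type*} [Fintype α] [Fintype β] [Fintype γ]

/-- With `f` the law of a triple `(X₁, X₂, X₃)`, this is
`P₁₂(a,b) P₂₃(b,c) P₁₃(a,c) / (P₂(b) ∑_b' P₁₂(a,b') P₂₃(b',c) / P₂(b'))`. -/
noncomputable def oneStepClosure (f : α → β → γ → ℝ) (a : α) (b : β) (c : γ) : ℝ :=
  (∑ c', f a b c') * (∑ a', f a' b c) * (∑ b', f a b' c)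
    / ((∑ a', ∑ c', f a' b c')
        * ∑ b', (∑ c', f a b' c') * (∑ a', f a' b' c) / ∑ a', ∑ c', f a' b' c')

theorem oneStepClosure_eq_self_of_deterministic_fst {f : α → β → γ → ℝ}
    (hf : ∀ a b c, 0 ≤ f a b c) (a₀ : α) (hf0 : ∀ a ≠ a₀, f a = 0) (a : α) (b : β) (c : γ) :
    oneStepClosure f a b c = f a b c := by
  have hsum : ∀ b c, ∑ a, f a b c = f a₀ b c := fun b c =>
    Fintype.sum_eq_single a₀ fun a ha => by simp [hf0 a ha]
  have hsum₂ : ∀ b, ∑ a, ∑ c, f a b c = ∑ c, f a₀ b c := fun b =>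
    Fintype.sum_eq_single a₀ fun a ha => by simp [hf0 a ha]
  rcases eq_or_ne a a₀ with rfl | ha
  · have hrow : ∀ b c, ∑ c', f a b c' = 0 → f a b c = 0 := fun b c h =>
      (sum_eq_zero_iff_of_nonneg fun c' _ => hf a b c').1 h c (mem_univ c)
    have hcol : ∀ b c, ∑ b', f a b' c = 0 → f a b c = 0 := fun b c h =>
      (sum_eq_zero_iff_of_nonneg fun b' _ => hf a b' c).1 h b (mem_univ b)
    have hden : ∑ b', (∑ c', f a b' c') * f a b' c / ∑ c', f a b' c' = ∑ b', f a b' c :=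
      sum_congr rfl fun b' _ => mul_div_cancel_left_of_imp (hrow b' c)
    simp only [oneStepClosure, hsum, hsum₂, hden]
    rw [mul_right_comm, mul_div_cancel_left_of_imp]
    intro h
    rcases mul_eq_zero.1 h with h | h
    exacts [hrow b c h, hcol b c h]
  · simp [oneStepClosure, hf0 a ha]

end OneStepClosure

section SI

variable {V : Type*} [Fintype V] [DecidableEq V] (G : SimpleGraph V) [DecidableRel G.Adj]

theorem siRate_nonneg {τ : ℝ} (hτ : 0 ≤ τ) (x y : V → Fin 2) : 0 ≤ siRate G τ x y :=
  sum_nonneg fun _ _ => by split_ifs <;> positivity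

theorem siRate_eq_zero_of_lt (τ : ℝ) {x y : V → Fin 2} {i : V} (h : y i < x i) :
    siRate G τ x y = 0 := by
  refine sum_eq_zero fun k _ => if_neg ?_
  rintro ⟨hagree, hxk, -⟩
  by_cases hki : i = k
  · subst hki
    exact absurd h (by simp [hxk])
  · exact h.ne (hagree i hki).symm

theorem siGen_blockTriangular (τ : ℝ) (i : V) : (siGen G τ).BlockTriangular (fun x => x i) :=
  fun x y h => by
    rw [siGen, if_neg (fun hxy => h.ne (congrFun hxy i).symm)]
    exact siRate_eq_zero_of_lt G τ h

theorem siP_eq_zero_of_lt (τ : ℝ) (x0 : V → Fin 2) (t : ℝ) {x : V → Fin 2} {i : V}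
    (h : x i < x0 i) : siP G τ x0 t x = 0 :=
  (((siGen_blockTriangular G τ i).smul_s8 t).exp) h

theorem siP_nonneg {τ t : ℝ} (hτ : 0 ≤ τ) (ht : 0 ≤ t) (x0 x : V → Fin 2) :
    0 ≤ siP G τ x0 t x :=
  Matrix.exp_apply_nonneg_of_offDiag_nonneg (fun y z hyz => by
    rw [Matrix.smul_apply, siGen, if_neg hyz, smul_eq_mul]
    exact mul_nonneg ht (siRate_nonneg G hτ y z)) x0 x

end SI

/-- For Markovian SI dynamics on the closed triangle started from `(I,S,S)`, the one-step
maximum-entropy closure is exact: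
`P₁₂₃(A,B,C) = P₁₂(A,B)·P₂₃(B,C)·P₁₃(A,C) / (P₂(B) · ∑_b P₁₂(A,b)·P₂₃(b,C)/P₂(b))`,
with Lean's convention `x/0 = 0`. -/
theorem si_triangle_oneStepME_exact
    (τ : ℝ) (hτ : 0 < τ) (A B C : Fin 2) (t : ℝ) (ht : 0 < t) :
    siP3 triangle τ ![1, 0, 0] 0 1 2 A B C t
      = siP2 triangle τ ![1, 0, 0] 0 1 A B t * siP2 triangle τ ![1, 0, 0] 1 2 B C t
          * siP2 triangle τ ![1, 0, 0] 0 2 A C t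
        / (siP1 triangle τ ![1, 0, 0] 1 B t
            * ∑ b : Fin 2, siP2 triangle τ ![1, 0, 0] 0 1 A b t
                * siP2 triangle τ ![1, 0, 0] 1 2 b C t / siP1 triangle τ ![1, 0, 0] 1 b t) := by
  set f := fun a b c => siP3 triangle τ ![1, 0, 0] 0 1 2 a b c t
  have hf : ∀ a b c, 0 ≤ f a b c := fun a b c =>
    sum_nonneg fun x _ => siP_nonneg _ hτ.le ht.le _ x
  have hf0 : ∀ a ≠ 1, f a = 0 := fun a ha => by
    funext b c
    refine sum_eq_zero fun x hx => siP_eq_zero_of_lt _ _ _ _ (i := 0) ?_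
    rw [(mem_filter.1 hx).2.1]
    exact lt_of_le_of_ne (Fin.le_last a) ha
  simp only [siP1_eq_sum_siP2 (G := triangle) (i := 0),
    siP2_eq_sum_siP3_right (G := triangle) (i := 0) (j := 1) (k := 2),
    siP2_eq_sum_siP3_left (G := triangle) (i := 0) (j := 1) (k := 2),
    siP2_eq_sum_siP3_mid (G := triangle) (i := 0) (j := 1) (k := 2)]
  exact (oneStepClosure_eq_self_of_deterministic_fst hf 1 hf0 A B C).symm
end

section
/- Let Ω₁, Ω₂, Ω₃ be nonempty finite types and r : Ω₁ × Ω₂ × Ω₃ → ℝ a probability distribution (r ≥ 0 and ∑ r = 1), with marginals r₁₂(a,b) = ∑_c r(a,b,c), r₂₃(b,c) = ∑_a r(a,b,c) and r₂(b) = ∑_{a,c} r(a,b,c). Define the unclustered closure o(a,b,c) = r₁₂(a,b) · r₂₃(b,c) / r₂(b) (with Lean's convention x/0 = 0). Then: (i) o is a probability distribution whose (1,2)-marginal is r₁₂ and whose (2,3)-marginal is r₂₃; and (ii) o maximizes Shannon entropy among all such distributions, i.e. for every q : Ω₁ × Ω₂ × Ω₃ → ℝ with q ≥ 0, (1,2)-marginal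 r₁₂ and (2,3)-marginal r₂₃, one has H(q) ≤ H(o). -/
open Finset

-- pointwise Gibbs

/-- Shannon entropy of a nonnegative function on a finite type, with the convention
`0 · log 0 = 0` (automatic since `Real.log 0 = 0`). -/
noncomputable def shannonEntropy {Ω : Type*} [Fintype Ω] (q : Ω → ℝ) : ℝ :=
  -∑ x, q x * Real.log (q x)

/-- The `(1,2)`-marginal of a function on a triple product. -/
noncomputable def marg12 {Ω₁ Ω₂ Ω₃ : Type*} [Fintype Ω₃] (r : Ω₁ × Ω₂ × Ω₃ → ℝ)
    (a : Ω₁) (b : Ω₂) : ℝ := ∑ c, r (a, b, c)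

/-- The `(2,3)`-marginal of a function on a triple product. -/
noncomputable def marg23 {Ω₁ Ω₂ Ω₃ : Type*} [Fintype Ω₁] (r : Ω₁ × Ω₂ × Ω₃ → ℝ)
    (b : Ω₂) (c : Ω₃) : ℝ := ∑ a, r (a, b, c)

/-- The middle single-node marginal of a function on a triple product. -/
noncomputable def marg2 {Ω₁ Ω₂ Ω₃ : Type*} [Fintype Ω₁] [Fintype Ω₃]
    (r : Ω₁ × Ω₂ × Ω₃ → ℝ) (b : Ω₂) : ℝ := ∑ a, ∑ c, r (a, b, c)

/-- The unclustered closure `o(a,b,c) = r₁₂(a,b) · r₂₃(b,c) / r₂(b)`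
(with Lean's convention `x/0 = 0`). -/
noncomputable def unclusteredClosure {Ω₁ Ω₂ Ω₃ : Type*} [Fintype Ω₁] [Fintype Ω₃]
    (r : Ω₁ × Ω₂ × Ω₃ → ℝ) (x : Ω₁ × Ω₂ × Ω₃) : ℝ :=
  marg12 r x.1 x.2.1 * marg23 r x.2.1 x.2.2 / marg2 r x.2.1

lemma gibbs_point (q o : ℝ) (hq : 0 ≤ q) (ho : 0 ≤ o) (habs : o = 0 → q = 0) :
    q - o ≤ q * Real.log q - q * Real.log o := by
  rcases eq_or_lt_of_le hq with h | hqpos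
  · simp only [← h, zero_mul, sub_zero, zero_sub, neg_nonpos, sub_self]
    linarith
  · have hone : o ≠ 0 := fun h => by simp [habs h] at hqpos
    have hopos : 0 < o := lt_of_le_of_ne ho (Ne.symm hone)
    have := Real.log_le_sub_one_of_pos (div_pos hopos hqpos)
    rw [Real.log_div (ne_of_gt hopos) (ne_of_gt hqpos)] at this
    have h2 : q * (Real.log o - Real.log q) ≤ q * (o / q - 1) :=
      mul_le_mul_of_nonneg_left this hq
    have h3 : q * (o / q) = o := by field_simp
    rw [mul_sub, mul_sub, h3] at h2
    linarith

lemma gibbs {Ω : Type*} [Fintype Ω] (q o : Ω → ℝ) (hq : ∀ x, 0 ≤ q x)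
    (ho : ∀ x, 0 ≤ o x) (habs : ∀ x, o x = 0 → q x = 0)
    (hsum : ∑ x, q x = ∑ x, o x) :
    ∑ x, q x * Real.log (o x) ≤ ∑ x, q x * Real.log (q x) := by
  have h : ∑ x, (q x - o x) ≤ ∑ x, (q x * Real.log (q x) - q x * Real.log (o x)) :=
    Finset.sum_le_sum fun x _ => gibbs_point _ _ (hq x) (ho x) (habs x)
  rw [Finset.sum_sub_distrib, Finset.sum_sub_distrib, hsum] at h
  linarith

section MaxEntAux
variable {Ω₁ Ω₂ Ω₃ : Type*} [Fintype Ω₁] [Fintype Ω₂] [Fintype Ω₃]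

lemma sumsplit (f : Ω₁ × Ω₂ × Ω₃ → ℝ) : ∑ x, f x = ∑ a, ∑ b, ∑ c, f (a, b, c) := by
  simp [Fintype.sum_prod_type]

lemma sumsplit' (f : Ω₁ × Ω₂ × Ω₃ → ℝ) :
    ∑ x, f x = ∑ b, ∑ c, ∑ a, f (a, b, c) := by
  rw [Fintype.sum_prod_type, Finset.sum_comm, Fintype.sum_prod_type]

lemma marg2_eq_sum_marg12 (f : Ω₁ × Ω₂ × Ω₃ → ℝ) (b : Ω₂) :
    marg2 f b = ∑ a, marg12 f a b := rfl

lemma marg2_eq_sum_marg23 (f : Ω₁ × Ω₂ × Ω₃ → ℝ) (b : Ω₂) :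
    marg2 f b = ∑ c, marg23 f b c := by
  rw [marg2, Finset.sum_comm]; rfl

end MaxEntAux

/-- The unclustered closure of a probability distribution `r` on `Ω₁ × Ω₂ × Ω₃` is a
probability distribution with the same `(1,2)`- and `(2,3)`-marginals as `r`, and it maximizes
Shannon entropy among all nonnegative functions with those marginals. -/
theorem unclusteredClosure_is_maxEnt {Ω₁ Ω₂ Ω₃ : Type*}
    [Fintype Ω₁] [Fintype Ω₂] [Fintype Ω₃] [Nonempty Ω₁] [Nonempty Ω₂] [Nonempty Ω₃]
    (r : Ω₁ × Ω₂ × Ω₃ → ℝ) (hr0 : ∀ x, 0 ≤ r x) (hr1 : ∑ x, r x = 1) :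
    (∀ x, 0 ≤ unclusteredClosure r x) ∧
    (∑ x, unclusteredClosure r x = 1) ∧
    (∀ a b, marg12 (unclusteredClosure r) a b = marg12 r a b) ∧
    (∀ b c, marg23 (unclusteredClosure r) b c = marg23 r b c) ∧
    (∀ q : Ω₁ × Ω₂ × Ω₃ → ℝ, (∀ x, 0 ≤ q x) →
      (∀ a b, marg12 q a b = marg12 r a b) →
      (∀ b c, marg23 q b c = marg23 r b c) →
      shannonEntropy q ≤ shannonEntropy (unclusteredClosure r)) := by
  have h12nn : ∀ a b, 0 ≤ marg12 r a b := fun a b => Finset.sum_nonneg fun c _ => hr0 _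
  have h23nn : ∀ b c, 0 ≤ marg23 r b c := fun b c => Finset.sum_nonneg fun a _ => hr0 _
  have h2nn : ∀ b, 0 ≤ marg2 r b :=
    fun b => Finset.sum_nonneg fun a _ => Finset.sum_nonneg fun c _ => hr0 _
  have hzero12 : ∀ a b, marg2 r b = 0 → marg12 r a b = 0 := by
    intro a b hb
    rw [marg2_eq_sum_marg12] at hb
    exact (Finset.sum_eq_zero_iff_of_nonneg fun a _ => h12nn a b).mp hb a (Finset.mem_univ a)
  have hzero23 : ∀ b c, marg2 r b = 0 → marg23 r b c = 0 := by
    intro b c hb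
    rw [marg2_eq_sum_marg23] at hb
    exact (Finset.sum_eq_zero_iff_of_nonneg fun c _ => h23nn b c).mp hb c (Finset.mem_univ c)
  have part1 : ∀ x, 0 ≤ unclusteredClosure r x := fun x =>
    div_nonneg (mul_nonneg (h12nn _ _) (h23nn _ _)) (h2nn _)
  have part3 : ∀ a b, marg12 (unclusteredClosure r) a b = marg12 r a b := by
    intro a b
    unfold marg12 unclusteredClosure
    by_cases hb : marg2 r b = 0
    · simp only [hb, div_zero, Finset.sum_const_zero]
      exact (hzero12 a b hb).symm
    · simp only
      rw [← Finset.sum_div, ← Finset.mul_sum, ← marg2_eq_sum_marg23, mul_div_assoc,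
        div_self hb, mul_one]
      rfl
  have part4 : ∀ b c, marg23 (unclusteredClosure r) b c = marg23 r b c := by
    intro b c
    unfold marg23 unclusteredClosure
    by_cases hb : marg2 r b = 0
    · simp only [hb, div_zero, Finset.sum_const_zero]
      exact (hzero23 b c hb).symm
    · simp only
      rw [← Finset.sum_div, ← Finset.sum_mul, ← marg2_eq_sum_marg12, mul_comm,
        mul_div_assoc, div_self hb, mul_one]
      rfl
  have hmass : ∀ f : Ω₁ × Ω₂ × Ω₃ → ℝ, (∀ a b, marg12 f a b = marg12 r a b) →
      ∑ x, f x = 1 := by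
    intro f h12
    rw [sumsplit f, ← hr1, sumsplit r]
    exact Finset.sum_congr rfl fun a _ => Finset.sum_congr rfl fun b _ => h12 a b
  have part2 : ∑ x, unclusteredClosure r x = 1 := hmass _ part3
  refine ⟨part1, part2, part3, part4, ?_⟩
  intro q hq0 hq12 hq23
  have habs : ∀ f : Ω₁ × Ω₂ × Ω₃ → ℝ, (∀ x, 0 ≤ f x) →
      (∀ a b, marg12 f a b = marg12 r a b) → (∀ b c, marg23 f b c = marg23 r b c) →
      ∀ x, unclusteredClosure r x = 0 → f x = 0 := by
    rintro f hf h12 h23 ⟨a, b, c⟩ hx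
    unfold unclusteredClosure at hx
    have hkey : marg12 r a b = 0 ∨ marg23 r b c = 0 := by
      by_cases hb : marg2 r b = 0
      · exact Or.inl (hzero12 a b hb)
      · rcases div_eq_zero_iff.mp hx with h | h
        · exact mul_eq_zero.mp h
        · exact absurd h hb
    rcases hkey with h | h
    · have h0 : marg12 f a b = 0 := (h12 a b).trans h
      rw [marg12] at h0
      exact (Finset.sum_eq_zero_iff_of_nonneg fun c _ => hf (a, b, c)).mp h0 c
        (Finset.mem_univ c)
    · have h0 : marg23 f b c = 0 := (h23 b c).trans h
      rw [marg23] at h0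
      exact (Finset.sum_eq_zero_iff_of_nonneg fun a _ => hf (a, b, c)).mp h0 a
        (Finset.mem_univ a)
  have key : ∀ f : Ω₁ × Ω₂ × Ω₃ → ℝ, (∀ x, 0 ≤ f x) →
      (∀ a b, marg12 f a b = marg12 r a b) → (∀ b c, marg23 f b c = marg23 r b c) →
      ∑ x, f x * Real.log (unclusteredClosure r x) =
        (∑ a, ∑ b, marg12 r a b * Real.log (marg12 r a b)) +
        (∑ b, ∑ c, marg23 r b c * Real.log (marg23 r b c)) -
        (∑ b, marg2 r b * Real.log (marg2 r b)) := by
    intro f hf h12 h23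
    have hpt : ∀ x, f x * Real.log (unclusteredClosure r x) =
        f x * Real.log (marg12 r x.1 x.2.1) + f x * Real.log (marg23 r x.2.1 x.2.2) -
        f x * Real.log (marg2 r x.2.1) := by
      intro x
      by_cases hfx : f x = 0
      · simp [hfx]
      · have ho : unclusteredClosure r x ≠ 0 := fun h => hfx (habs f hf h12 h23 x h)
        have hs : marg2 r x.2.1 ≠ 0 := by
          intro h; apply ho; unfold unclusteredClosure; rw [h, div_zero]
        have hnum : marg12 r x.1 x.2.1 * marg23 r x.2.1 x.2.2 ≠ 0 := by
          intro h; apply ho; unfold unclusteredClosure; rw [h, zero_div]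
        rcases mul_ne_zero_iff.mp hnum with ⟨h1, h2⟩
        unfold unclusteredClosure
        rw [Real.log_div hnum hs, Real.log_mul h1 h2]
        ring
    calc ∑ x, f x * Real.log (unclusteredClosure r x)
        = (∑ x, f x * Real.log (marg12 r x.1 x.2.1)) +
          (∑ x, f x * Real.log (marg23 r x.2.1 x.2.2)) -
          (∑ x, f x * Real.log (marg2 r x.2.1)) := by
          rw [← Finset.sum_add_distrib, ← Finset.sum_sub_distrib]
          exact Finset.sum_congr rfl fun x _ => hpt x
      _ = _ := by
          congr 2
          · rw [sumsplit]
            refine Finset.sum_congr rfl fun a _ => Finset.sum_congr rfl fun b _ => ?_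
            show ∑ c, f (a, b, c) * Real.log (marg12 r a b) =
              marg12 r a b * Real.log (marg12 r a b)
            rw [← Finset.sum_mul]
            exact congrArg (· * Real.log (marg12 r a b)) (h12 a b)
          · rw [sumsplit']
            refine Finset.sum_congr rfl fun b _ => Finset.sum_congr rfl fun c _ => ?_
            show ∑ a, f (a, b, c) * Real.log (marg23 r b c) =
              marg23 r b c * Real.log (marg23 r b c)
            rw [← Finset.sum_mul]
            exact congrArg (· * Real.log (marg23 r b c)) (h23 b c)
          · rw [sumsplit']
            refine Finset.sum_congr rfl fun b _ => ?_
            have hcol : (∑ c, ∑ a, f (a, b, c)) = marg2 r b := by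
              calc (∑ c, ∑ a, f (a, b, c)) = ∑ a, marg12 f a b := Finset.sum_comm
                _ = ∑ a, marg12 r a b := Finset.sum_congr rfl fun a _ => h12 a b
                _ = marg2 r b := (marg2_eq_sum_marg12 r b).symm
            show ∑ c, ∑ a, f (a, b, c) * Real.log (marg2 r b) =
              marg2 r b * Real.log (marg2 r b)
            calc ∑ c, ∑ a, f (a, b, c) * Real.log (marg2 r b)
                = ∑ c, (∑ a, f (a, b, c)) * Real.log (marg2 r b) :=
                  Finset.sum_congr rfl fun c _ => (Finset.sum_mul _ _ _).symm
              _ = (∑ c, ∑ a, f (a, b, c)) * Real.log (marg2 r b) :=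
                  (Finset.sum_mul _ _ _).symm
              _ = marg2 r b * Real.log (marg2 r b) := by rw [hcol]
  have hq1 : ∑ x, q x = 1 := hmass q hq12
  have hgibbs := gibbs q (unclusteredClosure r) hq0 part1 (habs q hq0 hq12 hq23)
    (by rw [hq1, part2])
  have e1 := key q hq0 hq12 hq23
  have e2 := key (unclusteredClosure r) part1 part3 part4
  rw [shannonEntropy, shannonEntropy]
  linarith
end

section
/- On the open triplet, the iterative scaling algorithm started from the uniform distribution reaches the unclustered closure after one scaling step per pair: let Ω₁, Ω₂, Ω₃ be nonempty finite types and r : Ω₁ × Ω₂ × Ω₃ → ℝ a probability distribution (r ≥ 0, ∑ r = 1) with marginals r₁₂(a,b) = ∑_c r(a,b,c), r₂₃(b,c) = ∑_a r(a,b,c), r₂(b) = ∑_{a,c} r(a,b,c). Define P⁰(a,b,c) = 1/(|Ω₁|·|Ω₂|·|Ω₃|), P¹(a,b,c) = r₁₂(a,b) · P⁰(a,b,c) / ∑_{c'} P⁰(a,b,c'), and P²(a,b,c) = r₂₃(b,c) · P¹(a,b,c) / ∑_{a'} P¹(a',b,c) (with Lean's convention x/0 = 0). Then P²(a,b,c)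 = r₁₂(a,b) · r₂₃(b,c) / r₂(b) for all a, b, c. -/
open Finset

/-- The `(1,2)`-marginal of a distribution on a triple product. -/
noncomputable def m12 {Ω₁ Ω₂ Ω₃ : Type*} [Fintype Ω₃] (r : Ω₁ × Ω₂ × Ω₃ → ℝ)
    (a : Ω₁) (b : Ω₂) : ℝ := ∑ c, r (a, b, c)

/-- The `(2,3)`-marginal of a distribution on a triple product. -/
noncomputable def m23 {Ω₁ Ω₂ Ω₃ : Type*} [Fintype Ω₁] (r : Ω₁ × Ω₂ × Ω₃ → ℝ)
    (b : Ω₂) (c : Ω₃) : ℝ := ∑ a, r (a, b, c)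

/-- The middle single-node marginal of a distribution on a triple product. -/
noncomputable def m2 {Ω₁ Ω₂ Ω₃ : Type*} [Fintype Ω₁] [Fintype Ω₃]
    (r : Ω₁ × Ω₂ × Ω₃ → ℝ) (b : Ω₂) : ℝ := ∑ a, ∑ c, r (a, b, c)

/-- The uniform distribution on `Ω₁ × Ω₂ × Ω₃`. -/
noncomputable def unif (Ω₁ Ω₂ Ω₃ : Type*) [Fintype Ω₁] [Fintype Ω₂] [Fintype Ω₃] :
    Ω₁ × Ω₂ × Ω₃ → ℝ :=
  fun _ => 1 / ((Fintype.card Ω₁ : ℝ) * (Fintype.card Ω₂ : ℝ) * (Fintype.card Ω₃ : ℝ))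

/-- One scaling step toward the `(1,2)`-marginal of `r` (Lean convention `x/0 = 0`). -/
noncomputable def scale12 {Ω₁ Ω₂ Ω₃ : Type*} [Fintype Ω₁] [Fintype Ω₂] [Fintype Ω₃]
    (r P : Ω₁ × Ω₂ × Ω₃ → ℝ) : Ω₁ × Ω₂ × Ω₃ → ℝ :=
  fun x => m12 r x.1 x.2.1 * P x / ∑ c', P (x.1, x.2.1, c')

/-- One scaling step toward the `(2,3)`-marginal of `r` (Lean convention `x/0 = 0`). -/
noncomputable def scale23 {Ω₁ Ω₂ Ω₃ : Type*} [Fintype Ω₁] [Fintype Ω₂] [Fintype Ω₃]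
    (r P : Ω₁ × Ω₂ × Ω₃ → ℝ) : Ω₁ × Ω₂ × Ω₃ → ℝ :=
  fun x => m23 r x.2.1 x.2.2 * P x / ∑ a', P (a', x.2.1, x.2.2)

/-- Starting from the uniform distribution, one iterative-scaling step per pair of the open
triplet reaches the unclustered closure `r₁₂(a,b) · r₂₃(b,c) / r₂(b)`. -/
theorem iterative_scaling_reaches_unclustered_closure
    {Ω₁ Ω₂ Ω₃ : Type*} [Fintype Ω₁] [Fintype Ω₂] [Fintype Ω₃]
    [Nonempty Ω₁] [Nonempty Ω₂] [Nonempty Ω₃]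
    (r : Ω₁ × Ω₂ × Ω₃ → ℝ) (hr0 : ∀ x, 0 ≤ r x) (hr1 : ∑ x, r x = 1)
    (a : Ω₁) (b : Ω₂) (c : Ω₃) :
    scale23 r (scale12 r (unif Ω₁ Ω₂ Ω₃)) (a, b, c) = m12 r a b * m23 r b c / m2 r b := by
  have h1 : (Fintype.card Ω₁ : ℝ) ≠ 0 := Nat.cast_ne_zero.mpr Fintype.card_ne_zero
  have h2 : (Fintype.card Ω₂ : ℝ) ≠ 0 := Nat.cast_ne_zero.mpr Fintype.card_ne_zero
  have h3 : (Fintype.card Ω₃ : ℝ) ≠ 0 := Nat.cast_ne_zero.mpr Fintype.card_ne_zero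
  have key : ∀ x : Ω₁ × Ω₂ × Ω₃,
      scale12 r (unif Ω₁ Ω₂ Ω₃) x = m12 r x.1 x.2.1 / (Fintype.card Ω₃ : ℝ) := by
    intro x
    simp only [scale12, unif, Finset.sum_const, card_univ, nsmul_eq_mul]
    rw [div_eq_div_iff (by positivity) h3]
    ring
  simp only [scale23, key]
  rw [← Finset.sum_div]
  have hm2 : ∑ a', m12 r a' b = m2 r b := by simp [m12, m2]
  rw [hm2]
  by_cases h : m2 r b = 0
  · simp [h]
  · field_simp
end

section
/- The two 3×3 real generator matrices M₁ = !![-1, 1/2, 1/2; 0, 0, 0; 0, 0, 0] and M₂ = !![-1, 1/2, 1/2; 0, -1, 1; 0, 1, -1] define continuous-time Markov chains with identical marginal distributions when started in the first state: for every t ≥ 0 and every j ∈ Fin 3, (Matrix.exp ℝ (t • M₁)) 0 j = (Matrix.exp ℝ (t • M₂)) 0 j. -/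
/-!
Both generators send the first basis row vector `e₀` to `r = (-1, 1/2, 1/2)` and send `r` to `-r`.
So on the set `{e₀, r, -r}`, which `M₁` maps into itself, the right actions of `M₁` and `M₂`
coincide; hence `e₀ M₁ⁿ = e₀ M₂ⁿ` for every `n`, and the first rows of the exponential series of
`t • M₁` and `t • M₂` agree term by term.
-/

open NormedSpace

theorem ContinuousLinearMap.map_exp_eq_of_map_pow_eq {𝕂 𝔸 E : Type*} [NontriviallyNormedField 𝕂]
    [CharZero 𝕂] [ContinuousSMul ℚ 𝕂] [NormedRing 𝔸] [NormedAlgebra 𝕂 𝔸] [CompleteSpace 𝔸]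
    [AddCommMonoid E] [Module 𝕂 E] [TopologicalSpace E] [T2Space E]
    (L : 𝔸 →L[𝕂] E) {x y : 𝔸} (h : ∀ n : ℕ, L (x ^ n) = L (y ^ n)) :
    L (exp x) = L (exp y) := by
  simp only [exp_eq_tsum 𝕂, L.map_tsum (expSeries_summable' _), map_smul, h]

namespace Matrix

variable {m : Type*} [Fintype m]

theorem vecMul_pow_eq_of_invariant {R : Type*} [Semiring R] [DecidableEq m] {A B : Matrix m m R}
    {S : Set (m → R)} (hS : ∀ x ∈ S, x ᵥ* A ∈ S) (hAB : ∀ x ∈ S, x ᵥ* A = x ᵥ* B)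
    {v : m → R} (hv : v ∈ S) (k : ℕ) : v ᵥ* A ^ k = v ᵥ* B ^ k := by
  induction k generalizing v with
  | zero => rfl
  | succ k ih =>
    rw [pow_succ', pow_succ', ← vecMul_vecMul, ← vecMul_vecMul, ← hAB v hv, ih (hS v hv)]

section

-- `exp` is defined from the topology alone, so any compatible matrix norm may be used.
attribute [local instance] Matrix.linftyOpNormedRing Matrix.linftyOpNormedAlgebra

theorem vecMul_exp_eq_of_vecMul_pow_eq {𝕂 : Type*} [RCLike 𝕂] [DecidableEq m]
    {A B : Matrix m m 𝕂} {v : m → 𝕂} (h : ∀ k : ℕ, v ᵥ* A ^ k = v ᵥ* B ^ k) :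
    v ᵥ* exp A = v ᵥ* exp B :=
  (LinearMap.toContinuousLinearMap (vecMulBilin 𝕂 𝕂 v)).map_exp_eq_of_map_pow_eq
    (x := A) (y := B) h

end

theorem vecMul_exp_smul_eq_of_invariant {𝕂 : Type*} [RCLike 𝕂] [DecidableEq m]
    {A B : Matrix m m 𝕂} {S : Set (m → 𝕂)} (hS : ∀ x ∈ S, x ᵥ* A ∈ S)
    (hAB : ∀ x ∈ S, x ᵥ* A = x ᵥ* B) {v : m → 𝕂} (hv : v ∈ S) (t : 𝕂) :
    v ᵥ* exp (t • A) = v ᵥ* exp (t • B) :=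
  vecMul_exp_eq_of_vecMul_pow_eq fun k => by
    rw [smul_pow, smul_pow, vecMul_smul, vecMul_smul, vecMul_pow_eq_of_invariant hS hAB hv]

end Matrix

open Matrix

theorem same_marginals_different_generators_general
    (t : ℝ) (j : Fin 3) :
    NormedSpace.exp (t • (!![-1, 1/2, 1/2; 0, 0, 0; 0, 0, 0] : Matrix (Fin 3) (Fin 3) ℝ)) 0 j
      = NormedSpace.exp
          (t • (!![-1, 1/2, 1/2; 0, -1, 1; 0, 1, -1] : Matrix (Fin 3) (Fin 3) ℝ)) 0 j := by
  set M₁ : Matrix (Fin 3) (Fin 3) ℝ := !![-1, 1/2, 1/2; 0, 0, 0; 0, 0, 0]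
  set M₂ : Matrix (Fin 3) (Fin 3) ℝ := !![-1, 1/2, 1/2; 0, -1, 1; 0, 1, -1]
  set r : Fin 3 → ℝ := ![-1, 1/2, 1/2]
  have single_M₁ : Pi.single 0 1 ᵥ* M₁ = r := by
    ext j; fin_cases j <;> simp [M₁, r, vecMul, dotProduct, Fin.sum_univ_three]
  have single_M₂ : Pi.single 0 1 ᵥ* M₂ = r := by
    ext j; fin_cases j <;> simp [M₂, r, vecMul, dotProduct, Fin.sum_univ_three]
  have r_M₁ : r ᵥ* M₁ = -r := by
    ext j; fin_cases j <;> simp [M₁, r, vecMul, dotProduct, Fin.sum_univ_three]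
  have r_M₂ : r ᵥ* M₂ = -r := by
    ext j; fin_cases j <;> simp [M₂, r, vecMul, dotProduct, Fin.sum_univ_three]
  let S : Set (Fin 3 → ℝ) := {Pi.single 0 1, r, -r}
  have hS : ∀ x ∈ S, x ᵥ* M₁ ∈ S := by
    rintro x (rfl | rfl | rfl)
    · simp [S, single_M₁]
    · simp [S, r_M₁]
    · simp [S, neg_vecMul, r_M₁]
  have hAB : ∀ x ∈ S, x ᵥ* M₁ = x ᵥ* M₂ := by
    rintro x (rfl | rfl | rfl)
    · rw [single_M₁, single_M₂]
    · rw [r_M₁, r_M₂]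
    · rw [neg_vecMul, neg_vecMul, r_M₁, r_M₂]
  have := vecMul_exp_smul_eq_of_invariant hS hAB (Set.mem_insert _ _) t
  simpa only [single_one_vecMul, row_apply] using congrFun this j

/-- The two generator matrices
`M₁ = !![-1, 1/2, 1/2; 0, 0, 0; 0, 0, 0]` and `M₂ = !![-1, 1/2, 1/2; 0, -1, 1; 0, 1, -1]`
define continuous-time Markov chains with identical marginal distributions when started in the
first state: the first rows of `exp (t • M₁)` and `exp (t • M₂)` agree for all `t ≥ 0`. -/
theorem same_marginals_different_generators
    (t : ℝ) (ht : 0 ≤ t) (j : Fin 3) :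
    NormedSpace.exp (t • (!![-1, 1/2, 1/2; 0, 0, 0; 0, 0, 0] : Matrix (Fin 3) (Fin 3) ℝ)) 0 j
      = NormedSpace.exp
          (t • (!![-1, 1/2, 1/2; 0, -1, 1; 0, 1, -1] : Matrix (Fin 3) (Fin 3) ℝ)) 0 j :=
  same_marginals_different_generators_general t j
end
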